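/- arXiv:2510.07317 — 6 statements merged into one kernel-verified Lean document; each statement's English description precedes it below -/
import Mathlib

section
/- Let n ≥ 1 and M = Σ_{i=1}^n σ_i^x ∈ ℝ^{2ⁿ×2ⁿ}. For all s, t ∈ {−1,+1}ⁿ, letting d = #{i : s_i ≠ t_i} be the number of coordinates in which s and t differ, the coefficient of e_t in M^d e_s (equivalently, the (t,s) entry of M^d with respect to the basis {e_s}) is strictly positive. Consequently the matrix M (and hence the initial Hamiltonian H_I = −κ M for any κ ≠ 0) is irreducible: for every pair of standard basis indices there is a power of M with a nonzero entry connecting them. -/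
open Matrix BigOperators

/-- The Pauli-`x` matrix `σ_x = [[0,1],[1,0]]`. -/
noncomputable def sigX : Matrix (Fin 2) (Fin 2) ℝ := !![0, 1; 1, 0]

/-- `σ_i^x := I^{⊗(i-1)} ⊗ σ_x ⊗ I^{⊗(n-i)}`, under the standard identification of
`ℝ^{2^n}` with functions `(Fin n → Fin 2) → ℝ`. -/
noncomputable def sigXi (n : ℕ) (i : Fin n) :
    Matrix (Fin n → Fin 2) (Fin n → Fin 2) ℝ :=
  Matrix.of fun x y =>
    ∏ j : Fin n, (if j = i then sigX else (1 : Matrix (Fin 2) (Fin 2) ℝ)) (x j) (y j)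

/-- `M = Σ_{i=1}^n σ_i^x`. -/
noncomputable def Mmat (n : ℕ) : Matrix (Fin n → Fin 2) (Fin n → Fin 2) ℝ :=
  ∑ i : Fin n, sigXi n i

/-- `e(1) = (1,0)ᵀ` and `e(-1) = (0,1)ᵀ`. -/
noncomputable def eQubit (a : ℝ) : Fin 2 → ℝ := if a = 1 then ![1, 0] else ![0, 1]

/-- `e_s = e(s₁) ⊗ ⋯ ⊗ e(s_n)`, which is a standard basis vector of `ℝ^{2ⁿ}`. -/
noncomputable def eTensor (n : ℕ) (s : Fin n → ℝ) : (Fin n → Fin 2) → ℝ :=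
  fun x => ∏ j : Fin n, eQubit (s j) (x j)

lemma sigX_nonneg (a b : Fin 2) : 0 ≤ sigX a b := by
  fin_cases a <;> fin_cases b <;> norm_num [sigX]

lemma sigX_pos (a b : Fin 2) (h : a ≠ b) : 0 < sigX a b := by
  fin_cases a <;> fin_cases b <;> simp_all [sigX]

lemma sigXi_nonneg (n : ℕ) (i : Fin n) (x y : Fin n → Fin 2) : 0 ≤ sigXi n i x y := by
  unfold sigXi
  simp only [Matrix.of_apply]
  apply Finset.prod_nonneg
  intro j _
  split
  · exact sigX_nonneg _ _
  · rw [Matrix.one_apply]; split <;> norm_num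

lemma Mmat_nonneg (n : ℕ) (x y : Fin n → Fin 2) : 0 ≤ Mmat n x y := by
  unfold Mmat
  rw [Matrix.sum_apply]
  exact Finset.sum_nonneg fun i _ => sigXi_nonneg n i x y

lemma Mmat_pow_nonneg (n k : ℕ) (x y : Fin n → Fin 2) : 0 ≤ (Mmat n ^ k) x y := by
  induction k generalizing x y with
  | zero => rw [pow_zero, Matrix.one_apply]; split <;> norm_num
  | succ k ih =>
    rw [pow_succ, Matrix.mul_apply]
    exact Finset.sum_nonneg fun z _ => mul_nonneg (ih x z) (Mmat_nonneg n z y)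

lemma Mmat_pos_of_adjacent (n : ℕ) (x z : Fin n → Fin 2) (i : Fin n)
    (hz : z = Function.update x i (z i)) (hxz : x i ≠ z i) : 0 < Mmat n x z := by
  have hterm : 0 < sigXi n i x z := by
    unfold sigXi
    simp only [Matrix.of_apply]
    apply Finset.prod_pos
    intro j _
    by_cases h : j = i
    · subst h; simp only [if_pos rfl]; exact sigX_pos _ _ hxz
    · have : z j = x j := by rw [hz, Function.update_of_ne h]
      simp [h, Matrix.one_apply, this]
  unfold Mmat
  rw [Matrix.sum_apply]
  exact Finset.sum_pos' (fun j _ => sigXi_nonneg n j x z) ⟨i, Finset.mem_univ i, hterm⟩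

lemma Mmat_pow_pos (n : ℕ) (x y : Fin n → Fin 2) :
    0 < (Mmat n ^ (Finset.univ.filter fun j => x j ≠ y j).card) x y := by
  generalize hd : (Finset.univ.filter fun j => x j ≠ y j).card = d
  induction d generalizing x y with
  | zero =>
    have hxy : x = y := by
      funext j
      by_contra h
      have hmem : j ∈ Finset.univ.filter fun j => x j ≠ y j := by simp [h]
      rw [Finset.card_eq_zero.mp hd] at hmem
      exact absurd hmem (Finset.notMem_empty j)
    subst hxy
    simp [Matrix.one_apply]
  | succ d ih =>
    obtain ⟨i, hi⟩ : ∃ i, x i ≠ y i := by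
      by_contra h
      push_neg at h
      have : (Finset.univ.filter fun j => x j ≠ y j) = ∅ := by
        ext j; simp [h j]
      rw [this] at hd
      simp at hd
    set z : Fin n → Fin 2 := Function.update x i (y i) with hzdef
    have hzi : z i = y i := Function.update_self i (y i) x
    have hxz : 0 < Mmat n x z := by
      apply Mmat_pos_of_adjacent n x z i
      · rw [hzi]
      · rw [hzi]; exact hi
    have hfilter : (Finset.univ.filter fun j => z j ≠ y j)
        = (Finset.univ.filter fun j => x j ≠ y j).erase i := by
      ext j
      simp only [Finset.mem_filter, Finset.mem_univ, true_and, Finset.mem_erase]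
      by_cases h : j = i
      · subst h; simp [hzi]
      · rw [hzdef, Function.update_of_ne h]; tauto
    have hcard : (Finset.univ.filter fun j => z j ≠ y j).card = d := by
      rw [hfilter, Finset.card_erase_of_mem (by simp [hi]), hd]; omega
    rw [pow_succ', Matrix.mul_apply]
    apply Finset.sum_pos'
      (fun w _ => mul_nonneg (Mmat_nonneg n x w) (Mmat_pow_nonneg n d w y))
    exact ⟨z, Finset.mem_univ z, mul_pos hxz (ih z y hcard)⟩

/-- The point of `Fin n → Fin 2` encoded by a sign vector. -/
noncomputable def pt (n : ℕ) (s : Fin n → ℝ) : Fin n → Fin 2 :=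
  fun j => if s j = 1 then 0 else 1

lemma eQubit_apply (a : ℝ) (b : Fin 2) :
    eQubit a b = if b = (if a = 1 then (0 : Fin 2) else 1) then 1 else 0 := by
  unfold eQubit
  by_cases h : a = 1 <;> fin_cases b <;> simp [h]

lemma eTensor_apply (n : ℕ) (s : Fin n → ℝ) (x : Fin n → Fin 2) :
    eTensor n s x = if x = pt n s then 1 else 0 := by
  unfold eTensor
  have : ∀ j : Fin n, eQubit (s j) (x j) = if x j = pt n s j then 1 else 0 := by
    intro j; rw [eQubit_apply]; rfl
  simp only [this]
  rw [Finset.prod_boole]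
  by_cases h : x = pt n s
  · subst h; simp
  · have : ¬ ∀ j ∈ Finset.univ, x j = pt n s j := by
      intro hall
      exact h (funext fun j => hall j (Finset.mem_univ j))
    rw [if_neg this, if_neg h]

lemma dot_collapse (n : ℕ) (A : Matrix (Fin n → Fin 2) (Fin n → Fin 2) ℝ)
    (s t : Fin n → ℝ) :
    eTensor n t ⬝ᵥ A.mulVec (eTensor n s) = A (pt n t) (pt n s) := by
  have hs : eTensor n s = fun x => if x = pt n s then 1 else 0 :=
    funext (eTensor_apply n s)
  have ht : eTensor n t = fun x => if x = pt n t then 1 else 0 :=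
    funext (eTensor_apply n t)
  rw [hs, ht]
  simp [Matrix.mulVec, dotProduct, mul_ite, ite_mul, Finset.sum_ite_eq', Finset.sum_ite_eq]

/-- For all `s, t ∈ {−1,+1}ⁿ`, with `d = #{i : s_i ≠ t_i}`, the coefficient of `e_t` in
`M^d e_s` is strictly positive; consequently `M` is irreducible (for every pair of
standard basis indices there is a power of `M` with a nonzero entry connecting them),
and hence so is the initial Hamiltonian `H_I = −κ M` for any `κ ≠ 0`. -/
theorem Mmat_pow_pos_and_irreducible (n : ℕ) (hn : 1 ≤ n)
    (s t : Fin n → ℝ) (hs : ∀ i, s i = 1 ∨ s i = -1) (ht : ∀ i, t i = 1 ∨ t i = -1) :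
    (0 < eTensor n t ⬝ᵥ
        ((Mmat n ^ Set.ncard {i : Fin n | s i ≠ t i}).mulVec (eTensor n s))) ∧
    (∀ x y : Fin n → Fin 2, ∃ k : ℕ, (Mmat n ^ k) x y ≠ 0) ∧
    (∀ κ : ℝ, κ ≠ 0 → ∀ x y : Fin n → Fin 2,
      ∃ k : ℕ, ((-(κ • Mmat n)) ^ k) x y ≠ 0) := by
  refine ⟨?_, ?_, ?_⟩
  · have hset : {i : Fin n | s i ≠ t i}
        = ↑(Finset.univ.filter fun j => pt n t j ≠ pt n s j) := by
      ext i
      simp only [Set.mem_setOf_eq, Finset.coe_filter, Finset.mem_univ, true_and]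
      rcases hs i with h1 | h1 <;> rcases ht i with h2 | h2 <;>
        simp [pt, h1, h2] <;> norm_num
    rw [hset, Set.ncard_coe_finset, dot_collapse]
    exact Mmat_pow_pos n (pt n t) (pt n s)
  · intro x y
    exact ⟨(Finset.univ.filter fun j => x j ≠ y j).card, ne_of_gt (Mmat_pow_pos n x y)⟩
  · intro κ hκ x y
    refine ⟨(Finset.univ.filter fun j => x j ≠ y j).card, ?_⟩
    have h1 : -(κ • Mmat n) = (-κ) • Mmat n := by rw [neg_smul]
    rw [h1, smul_pow, Matrix.smul_apply, smul_eq_mul]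
    exact mul_ne_zero (pow_ne_zero _ (neg_ne_zero.mpr hκ)) (ne_of_gt (Mmat_pow_pos n x y))
end

section
/- (No crossing of eigenvalues.) Let n ≥ 1, J ∈ ℝ^{n×n}, b ∈ ℝⁿ, and suppose the Ising cost s ↦ sᵀ J s + bᵀ s has a unique minimizer over {−1,+1}ⁿ (the ground state of H_P is non-degenerate). Let κ > 0, H_I = −κ Σ_{i=1}^n σ_i^x, H_P = Σ_{i,j} J_{ij} σ_i^z σ_j^z + Σ_i b_i σ_i^z, let T > 0 and let f : [0,T] → [0,1] be continuous and monotone non-decreasing with f(0) = 0, f(T) = 1, and f(t) < 1 for all t < T. Set H(t) = (1 − f(t)) H_I + f(t) H_P. Then for every t ∈ [0,T], the smallest eigenvalue of the real symmetric matrix H(t) is simple; that is, writing λ₁(t) ≤ λ₂(t) ≤ ⋯ ≤ λ_{2ⁿ}(t) for the eigenvalues of H(t) listed with multiplicity in non-decreasing order, one has λ₁(t) < λ₂(t). -/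
open Matrix BigOperators

/-- The Pauli-`z` matrix `σ_z = [[1,0],[0,-1]]`. -/
noncomputable def sigZ : Matrix (Fin 2) (Fin 2) ℝ := !![1, 0; 0, -1]

/-- `σ_i^z := I^{⊗(i-1)} ⊗ σ_z ⊗ I^{⊗(n-i)}`, under the standard identification of
`ℝ^{2^n}` with functions `(Fin n → Fin 2) → ℝ`. -/
noncomputable def sigZi (n : ℕ) (i : Fin n) :
    Matrix (Fin n → Fin 2) (Fin n → Fin 2) ℝ :=
  Matrix.of fun x y =>
    ∏ j : Fin n, (if j = i then sigZ else (1 : Matrix (Fin 2) (Fin 2) ℝ)) (x j) (y j)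

/-- The problem Hamiltonian `H_P = Σ_{i,j} J_{ij} σ_i^z σ_j^z + Σ_i b_i σ_i^z`. -/
noncomputable def HP (n : ℕ) (J : Matrix (Fin n) (Fin n) ℝ) (b : Fin n → ℝ) :
    Matrix (Fin n → Fin 2) (Fin n → Fin 2) ℝ :=
  (∑ i : Fin n, ∑ j : Fin n, J i j • (sigZi n i * sigZi n j)) +
    ∑ i : Fin n, b i • sigZi n i

/-- The initial Hamiltonian `H_I = −κ Σ_i σ_i^x`. -/
noncomputable def HI (n : ℕ) (κ : ℝ) : Matrix (Fin n → Fin 2) (Fin n → Fin 2) ℝ :=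
  -(κ • ∑ i : Fin n, sigXi n i)

/-- The interpolating Hamiltonian `H(t) = (1 − f(t)) H_I + f(t) H_P`. -/
noncomputable def Hmat (n : ℕ) (J : Matrix (Fin n) (Fin n) ℝ) (b : Fin n → ℝ) (κ : ℝ)
    (f : ℝ → ℝ) (t : ℝ) : Matrix (Fin n → Fin 2) (Fin n → Fin 2) ℝ :=
  (1 - f t) • HI n κ + f t • HP n J b

/-- The Ising cost `sᵀ J s + bᵀ s`. -/
noncomputable def isingCost (n : ℕ) (J : Matrix (Fin n) (Fin n) ℝ) (b : Fin n → ℝ)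
    (s : Fin n → ℝ) : ℝ :=
  s ⬝ᵥ J.mulVec s + b ⬝ᵥ s


section GeneralSpectral
variable {m : Type*} [Fintype m] [DecidableEq m]


lemma ortho_sum (A : Matrix m m ℝ) (hA : A.IsHermitian) (k l : m) :
    ∑ x, hA.eigenvectorBasis k x * hA.eigenvectorBasis l x = if k = l then 1 else 0 := by
  have := orthonormal_iff_ite.mp hA.eigenvectorBasis.orthonormal k l
  simp [PiLp.inner_apply, RCLike.inner_apply, conj_trivial] at this
  rw [← this]
  exact Finset.sum_congr rfl fun x _ => mul_comm _ _

lemma repr_sum (A : Matrix m m ℝ) (hA : A.IsHermitian) (u : m → ℝ) (x : m) :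
    u x = ∑ k, (∑ y, hA.eigenvectorBasis k y * u y) * hA.eigenvectorBasis k x := by
  have h := hA.eigenvectorBasis.sum_repr' (WithLp.toLp 2 u : EuclideanSpace ℝ m)
  have h2 := congrFun (congrArg (fun (v : EuclideanSpace ℝ m) => (v : m → ℝ)) h) x
  simp only [PiLp.inner_apply, RCLike.inner_apply, conj_trivial, PiLp.toLp_apply] at h2
  rw [← h2, WithLp.ofLp_sum, Finset.sum_apply]
  simp [mul_comm]

-- expansion helper
lemma expand_sum (B : m → m → ℝ) (hO : ∀ k l, ∑ x, B k x * B l x = if k = l then 1 else 0)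
    (c d : m → ℝ) :
    ∑ x, (∑ k, c k * B k x) * (∑ l, d l * B l x) = ∑ k, c k * d k := by
  have step : ∀ x, (∑ k, c k * B k x) * (∑ l, d l * B l x)
      = ∑ k, ∑ l, (c k * d l) * (B k x * B l x) := by
    intro x
    rw [Finset.sum_mul_sum]
    exact Finset.sum_congr rfl fun k _ => Finset.sum_congr rfl fun l _ => by ring
  calc ∑ x, (∑ k, c k * B k x) * (∑ l, d l * B l x)
      = ∑ x, ∑ k, ∑ l, (c k * d l) * (B k x * B l x) := Finset.sum_congr rfl fun x _ => step x
    _ = ∑ k, ∑ l, ∑ x, (c k * d l) * (B k x * B l x) := by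
        rw [Finset.sum_comm]
        exact Finset.sum_congr rfl fun k _ => Finset.sum_comm
    _ = ∑ k, ∑ l, (c k * d l) * (if k = l then 1 else 0) := by
        refine Finset.sum_congr rfl fun k _ => Finset.sum_congr rfl fun l _ => ?_
        rw [← Finset.mul_sum, hO k l]
    _ = ∑ k, c k * d k := by
        refine Finset.sum_congr rfl fun k _ => ?_
        simp

lemma mulVec_expand (A : Matrix m m ℝ) (hA : A.IsHermitian) (u : m → ℝ) (x : m) :
    (A *ᵥ u) x = ∑ k, ((∑ y, hA.eigenvectorBasis k y * u y) * hA.eigenvalues k)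
      * hA.eigenvectorBasis k x := by
  set B := hA.eigenvectorBasis
  set c : m → ℝ := fun k => ∑ y, B k y * u y with hc
  calc (A *ᵥ u) x = ∑ y, A x y * u y := rfl
    _ = ∑ y, A x y * (∑ k, c k * B k y) := by
        refine Finset.sum_congr rfl fun y _ => ?_
        rw [← repr_sum A hA u y]
    _ = ∑ y, ∑ k, c k * (A x y * B k y) := by
        refine Finset.sum_congr rfl fun y _ => ?_
        rw [Finset.mul_sum]
        exact Finset.sum_congr rfl fun k _ => by ring
    _ = ∑ k, ∑ y, c k * (A x y * B k y) := Finset.sum_comm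
    _ = ∑ k, (c k * hA.eigenvalues k) * B k x := by
        refine Finset.sum_congr rfl fun k _ => ?_
        rw [← Finset.mul_sum]
        have h' : ∑ y, A x y * B k y = hA.eigenvalues k * B k x :=
          congrFun (hA.mulVec_eigenvectorBasis k) x
        rw [h']; ring

lemma sumSq_eq (A : Matrix m m ℝ) (hA : A.IsHermitian) (u : m → ℝ) :
    ∑ x, u x ^ 2 = ∑ k, (∑ y, hA.eigenvectorBasis k y * u y) ^ 2 := by
  set B := hA.eigenvectorBasis
  set c : m → ℝ := fun k => ∑ y, B k y * u y with hc
  calc ∑ x, u x ^ 2 = ∑ x, (∑ k, c k * B k x) * (∑ l, c l * B l x) := by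
        refine Finset.sum_congr rfl fun x _ => ?_
        rw [← repr_sum A hA u x]; ring
    _ = ∑ k, c k * c k := expand_sum (fun k x => B k x) (ortho_sum A hA) c c
    _ = ∑ k, c k ^ 2 := by refine Finset.sum_congr rfl fun k _ => by ring

lemma quad_eq (A : Matrix m m ℝ) (hA : A.IsHermitian) (u : m → ℝ) :
    ∑ x, u x * (A *ᵥ u) x
      = ∑ k, hA.eigenvalues k * (∑ y, hA.eigenvectorBasis k y * u y) ^ 2 := by
  set B := hA.eigenvectorBasis
  set c : m → ℝ := fun k => ∑ y, B k y * u y with hc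
  calc ∑ x, u x * (A *ᵥ u) x
      = ∑ x, (∑ k, c k * B k x) * (∑ l, (c l * hA.eigenvalues l) * B l x) := by
        refine Finset.sum_congr rfl fun x _ => ?_
        rw [← repr_sum A hA u x, mulVec_expand A hA u x]
    _ = ∑ k, c k * (c k * hA.eigenvalues k) :=
        expand_sum (fun k x => B k x) (ortho_sum A hA) c (fun l => c l * hA.eigenvalues l)
    _ = ∑ k, hA.eigenvalues k * c k ^ 2 := by
        refine Finset.sum_congr rfl fun k _ => by ring

lemma rayleigh_le (A : Matrix m m ℝ) (hA : A.IsHermitian) (lam : ℝ)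
    (hlam : ∀ k, lam ≤ hA.eigenvalues k) (u : m → ℝ) :
    lam * ∑ x, u x ^ 2 ≤ ∑ x, u x * (A *ᵥ u) x := by
  rw [quad_eq A hA u, sumSq_eq A hA u, Finset.mul_sum]
  exact Finset.sum_le_sum fun k _ =>
    mul_le_mul_of_nonneg_right (hlam k) (sq_nonneg _)

lemma eigen_of_quad_eq (A : Matrix m m ℝ) (hA : A.IsHermitian) (lam : ℝ)
    (hlam : ∀ k, lam ≤ hA.eigenvalues k) (u : m → ℝ)
    (heq : ∑ x, u x * (A *ᵥ u) x = lam * ∑ x, u x ^ 2) :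
    A *ᵥ u = lam • u := by
  set B := hA.eigenvectorBasis
  set c : m → ℝ := fun k => ∑ y, B k y * u y with hc
  have hzero : ∑ k, (hA.eigenvalues k - lam) * c k ^ 2 = 0 := by
    have := heq
    rw [quad_eq A hA u, sumSq_eq A hA u, Finset.mul_sum] at this
    have h2 : ∑ k, (hA.eigenvalues k - lam) * c k ^ 2
        = ∑ k, hA.eigenvalues k * c k ^ 2 - ∑ k, lam * c k ^ 2 := by
      rw [← Finset.sum_sub_distrib]
      exact Finset.sum_congr rfl fun k _ => by ring
    rw [h2, this, sub_self]
  have hterm : ∀ k ∈ Finset.univ, (hA.eigenvalues k - lam) * c k ^ 2 = 0 := by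
    refine (Finset.sum_eq_zero_iff_of_nonneg fun k _ => ?_).mp hzero
    exact mul_nonneg (by linarith [hlam k]) (sq_nonneg _)
  have hck : ∀ k, c k * hA.eigenvalues k = lam * c k := by
    intro k
    rcases mul_eq_zero.mp (hterm k (Finset.mem_univ k)) with h | h
    · have : hA.eigenvalues k = lam := by linarith
      rw [this]; ring
    · have : c k = 0 := by
        have := sq_eq_zero_iff.mp h; exact this
      rw [this]; ring
  funext x
  rw [mulVec_expand A hA u x]
  show ∑ k, (c k * hA.eigenvalues k) * B k x = lam * u x
  calc ∑ k, (c k * hA.eigenvalues k) * B k x = ∑ k, lam * (c k * B k x) := by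
        refine Finset.sum_congr rfl fun k _ => ?_
        rw [hck k]; ring
    _ = lam * ∑ k, c k * B k x := by rw [Finset.mul_sum]
    _ = lam * u x := by rw [← repr_sum A hA u x]

lemma abs_eigen (A : Matrix m m ℝ) (hA : A.IsHermitian) (lam : ℝ)
    (hlam : ∀ k, lam ≤ hA.eigenvalues k) (hoff : ∀ x y, x ≠ y → A x y ≤ 0)
    (v : m → ℝ) (hv : A *ᵥ v = lam • v) :
    A *ᵥ (fun x => |v x|) = lam • (fun x => |v x|) := by
  set w : m → ℝ := fun x => |v x| with hw
  have hexp : ∀ u : m → ℝ, ∑ x, u x * (A *ᵥ u) x = ∑ x, ∑ y, A x y * (u x * u y) := by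
    intro u
    refine Finset.sum_congr rfl fun x _ => ?_
    rw [show (A *ᵥ u) x = ∑ y, A x y * u y from rfl, Finset.mul_sum]
    exact Finset.sum_congr rfl fun y _ => by ring
  have hle : ∑ x, w x * (A *ᵥ w) x ≤ ∑ x, v x * (A *ᵥ v) x := by
    rw [hexp w, hexp v]
    refine Finset.sum_le_sum fun x _ => Finset.sum_le_sum fun y _ => ?_
    by_cases hxy : x = y
    · subst hxy
      have : w x * w x = v x * v x := by simp [hw, abs_mul_abs_self]
      rw [this]
    · refine mul_le_mul_of_nonpos_left ?_ (hoff x y hxy)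
      calc v x * v y ≤ |v x * v y| := le_abs_self _
        _ = w x * w y := abs_mul _ _
  have hquadv : ∑ x, v x * (A *ᵥ v) x = lam * ∑ x, w x ^ 2 := by
    rw [hv]
    have : ∀ x, v x * (lam • v) x = lam * w x ^ 2 := by
      intro x
      show v x * (lam * v x) = lam * |v x| ^ 2
      rw [sq_abs]; ring
    rw [Finset.sum_congr rfl fun x _ => this x, ← Finset.mul_sum]
  have h1 : lam * ∑ x, w x ^ 2 ≤ ∑ x, w x * (A *ᵥ w) x := rayleigh_le A hA lam hlam w
  have heq : ∑ x, w x * (A *ᵥ w) x = lam * ∑ x, w x ^ 2 := le_antisymm (hquadv ▸ hle) h1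
  exact eigen_of_quad_eq A hA lam hlam w heq

lemma dep_of_conn [Nonempty m] (A : Matrix m m ℝ) (hA : A.IsHermitian) (lam : ℝ)
    (hlam : ∀ k, lam ≤ hA.eigenvalues k) (hoff : ∀ x y, x ≠ y → A x y ≤ 0)
    (hconn : ∀ v : m → ℝ, (∀ x, 0 ≤ v x) → A *ᵥ v = lam • v → (∃ x, v x = 0) → v = 0)
    (v w : m → ℝ) (hv : A *ᵥ v = lam • v) (hw : A *ᵥ w = lam • w) (hv0 : v ≠ 0) :
    ∃ c : ℝ, w = c • v := by
  have hpos : ∀ x, v x ≠ 0 := by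
    intro x hx
    have habs := abs_eigen A hA lam hlam hoff v hv
    have hz : (fun x => |v x|) = 0 :=
      hconn _ (fun x => abs_nonneg _) habs ⟨x, by simp [hx]⟩
    apply hv0
    funext y
    have := congrFun hz y
    simpa using abs_eq_zero.mp this
  obtain ⟨x₀⟩ := ‹Nonempty m›
  set u : m → ℝ := fun x => v x₀ * w x - w x₀ * v x with hu
  have hueig : A *ᵥ u = lam • u := by
    funext x
    have h1 := congrFun hv x
    have h2 := congrFun hw x
    show ∑ y, A x y * u y = lam * u x
    have : ∀ y, A x y * u y = v x₀ * (A x y * w y) - w x₀ * (A x y * v y) := by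
      intro y; simp only [hu]; ring
    rw [Finset.sum_congr rfl fun y _ => this y, Finset.sum_sub_distrib,
      ← Finset.mul_sum, ← Finset.mul_sum]
    have hv' : ∑ y, A x y * v y = lam * v x := h1
    have hw' : ∑ y, A x y * w y = lam * w x := h2
    rw [hv', hw']
    simp only [hu]; ring
  have hu0 : u = 0 := by
    have habs := abs_eigen A hA lam hlam hoff u hueig
    have hz : (fun x => |u x|) = 0 :=
      hconn _ (fun x => abs_nonneg _) habs ⟨x₀, abs_eq_zero.mpr (by simp only [hu]; ring)⟩
    funext y
    have := congrFun hz y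
    simpa using abs_eq_zero.mp this
  refine ⟨w x₀ / v x₀, ?_⟩
  funext x
  have h := congrFun hu0 x
  simp only [hu, Pi.zero_apply] at h
  show w x = w x₀ / v x₀ * v x
  rw [div_mul_eq_mul_div, eq_div_iff (hpos x₀)]
  linarith

lemma unique_min_of_dep [Nonempty m] (A : Matrix m m ℝ) (hA : A.IsHermitian)
    (i₀ : m) (hmin : ∀ k, hA.eigenvalues i₀ ≤ hA.eigenvalues k)
    (hdep : ∀ v w : m → ℝ, A *ᵥ v = hA.eigenvalues i₀ • v →
      A *ᵥ w = hA.eigenvalues i₀ • w → v ≠ 0 → ∃ c : ℝ, w = c • v) :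
    ∃! x : m, ∀ y : m, hA.eigenvalues x ≤ hA.eigenvalues y := by
  refine ⟨i₀, hmin, ?_⟩
  intro y hy
  by_contra hne
  have heqval : hA.eigenvalues y = hA.eigenvalues i₀ := le_antisymm (hy i₀) (hmin y)
  have hv : A *ᵥ (fun x => hA.eigenvectorBasis i₀ x)
      = hA.eigenvalues i₀ • (fun x => hA.eigenvectorBasis i₀ x) :=
    hA.mulVec_eigenvectorBasis i₀
  have hw : A *ᵥ (fun x => hA.eigenvectorBasis y x)
      = hA.eigenvalues i₀ • (fun x => hA.eigenvectorBasis y x) := by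
    have := hA.mulVec_eigenvectorBasis y
    rw [heqval] at this
    exact this
  have hv0 : (fun x => hA.eigenvectorBasis i₀ x) ≠ 0 := by
    intro h0
    have h1 := ortho_sum A hA i₀ i₀
    rw [if_pos rfl] at h1
    have : ∑ x, hA.eigenvectorBasis i₀ x * hA.eigenvectorBasis i₀ x = 0 := by
      refine Finset.sum_eq_zero fun x _ => ?_
      have := congrFun h0 x
      simp only [Pi.zero_apply] at this
      rw [this]; ring
    rw [this] at h1
    exact one_ne_zero h1.symm
  obtain ⟨c, hc⟩ := hdep _ _ hv hw hv0
  have hc0 : ∑ x, hA.eigenvectorBasis y x * hA.eigenvectorBasis i₀ x = c := by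
    calc ∑ x, hA.eigenvectorBasis y x * hA.eigenvectorBasis i₀ x
        = ∑ x, c * (hA.eigenvectorBasis i₀ x * hA.eigenvectorBasis i₀ x) := by
          refine Finset.sum_congr rfl fun x _ => ?_
          have := congrFun hc x
          simp only [Pi.smul_apply, smul_eq_mul] at this
          rw [this]; ring
      _ = c * ∑ x, hA.eigenvectorBasis i₀ x * hA.eigenvectorBasis i₀ x := by
          rw [Finset.mul_sum]
      _ = c := by rw [ortho_sum A hA i₀ i₀, if_pos rfl, mul_one]
  have hzero := ortho_sum A hA y i₀
  rw [if_neg hne] at hzero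
  have hcz : c = 0 := by rw [← hc0, hzero]
  have hone := ortho_sum A hA y y
  rw [if_pos rfl] at hone
  have : ∑ x, hA.eigenvectorBasis y x * hA.eigenvectorBasis y x = 0 := by
    refine Finset.sum_eq_zero fun x _ => ?_
    have := congrFun hc x
    simp only [Pi.smul_apply, smul_eq_mul] at this
    rw [this, hcz]; ring
  rw [this] at hone
  exact one_ne_zero hone.symm


lemma dep_diag (A : Matrix m m ℝ) (d : m → ℝ)
    (hd : ∀ x y, A x y = if x = y then d x else 0) (lam : ℝ) (xs : m)
    (hstrict : ∀ x, x ≠ xs → lam < d x) :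
    ∀ v w : m → ℝ, A *ᵥ v = lam • v → A *ᵥ w = lam • w → v ≠ 0 → ∃ c : ℝ, w = c • v := by
  have hpt : ∀ (v : m → ℝ), A *ᵥ v = lam • v → ∀ x, d x * v x = lam * v x := by
    intro v hv x
    have h1 : (A *ᵥ v) x = lam * v x := congrFun hv x
    have h2 : (A *ᵥ v) x = d x * v x := by
      show ∑ y, A x y * v y = d x * v x
      rw [Finset.sum_eq_single x]
      · rw [hd, if_pos rfl]
      · intro y _ hy
        rw [hd, if_neg (fun h => hy h.symm), zero_mul]
      · intro h; exact absurd (Finset.mem_univ x) h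
    rw [← h2, h1]
  have hsupp : ∀ (v : m → ℝ), A *ᵥ v = lam • v → ∀ x, x ≠ xs → v x = 0 := by
    intro v hv x hx
    have := hpt v hv x
    have hne : d x - lam ≠ 0 := by have := hstrict x hx; linarith
    have : (d x - lam) * v x = 0 := by linarith
    rcases mul_eq_zero.mp this with h | h
    · exact absurd h hne
    · exact h
  intro v w hv hw hv0
  have hvs : v xs ≠ 0 := by
    intro h
    apply hv0
    funext x
    by_cases hx : x = xs
    · rw [hx]; exact h
    · exact hsupp v hv x hx
  refine ⟨w xs / v xs, ?_⟩
  funext x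
  by_cases hx : x = xs
  · subst hx
    show w x = w x / v x * v x
    field_simp
  · show w x = w xs / v xs * v x
    rw [hsupp v hv x hx, hsupp w hw x hx, mul_zero]


end GeneralSpectral

lemma sigX_apply (a c : Fin 2) : sigX a c = if a = c then 0 else 1 := by
  fin_cases a <;> fin_cases c <;> simp [sigX]

lemma sigZ_apply (a c : Fin 2) : sigZ a c = if a = c then (if a = 0 then 1 else -1) else 0 := by
  fin_cases a <;> fin_cases c <;> simp [sigZ]

/-- sign vector associated to a spin configuration -/
noncomputable def sv (n : ℕ) (x : Fin n → Fin 2) : Fin n → ℝ :=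
  fun i => if x i = 0 then 1 else -1

lemma sigZi_apply (n : ℕ) (i : Fin n) (x y : Fin n → Fin 2) :
    sigZi n i x y = if x = y then sv n x i else 0 := by
  rw [sigZi, Matrix.of_apply]
  by_cases hxy : x = y
  · subst hxy
    rw [if_pos rfl]
    rw [Finset.prod_eq_single i]
    · rw [if_pos rfl, sigZ_apply, if_pos rfl]; rfl
    · intro j _ hj
      rw [if_neg hj, Matrix.one_apply_eq]
    · intro h; exact absurd (Finset.mem_univ i) h
  · rw [if_neg hxy]
    obtain ⟨j, hj⟩ : ∃ j, x j ≠ y j := by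
      by_contra h
      push_neg at h
      exact hxy (funext h)
    refine Finset.prod_eq_zero (Finset.mem_univ j) ?_
    by_cases hji : j = i
    · rw [if_pos hji, sigZ_apply, if_neg hj]
    · rw [if_neg hji, Matrix.one_apply_ne hj]

lemma sigXi_apply (n : ℕ) (i : Fin n) (x y : Fin n → Fin 2) :
    sigXi n i x y = if (x i ≠ y i ∧ ∀ j, j ≠ i → x j = y j) then 1 else 0 := by
  rw [sigXi, Matrix.of_apply]
  by_cases hall : ∀ j, j ≠ i → x j = y j
  · have hprod : ∏ j : Fin n, (if j = i then sigX else (1 : Matrix (Fin 2) (Fin 2) ℝ)) (x j) (y j)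
        = sigX (x i) (y i) := by
      rw [Finset.prod_eq_single i]
      · rw [if_pos rfl]
      · intro j _ hj
        rw [if_neg hj, hall j hj, Matrix.one_apply_eq]
      · intro h; exact absurd (Finset.mem_univ i) h
    rw [hprod, sigX_apply]
    by_cases hi : x i = y i
    · rw [if_pos hi, if_neg (by simp [hi])]
    · rw [if_neg hi, if_pos ⟨hi, hall⟩]
  · push_neg at hall
    obtain ⟨j, hji, hj⟩ := hall
    rw [if_neg (by intro h; exact hj (h.2 j hji))]
    refine Finset.prod_eq_zero (Finset.mem_univ j) ?_
    rw [if_neg hji, Matrix.one_apply_ne hj]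

lemma sigXi_symm (n : ℕ) (i : Fin n) (x y : Fin n → Fin 2) :
    sigXi n i x y = sigXi n i y x := by
  rw [sigXi_apply, sigXi_apply]
  congr 1
  simp only [eq_iff_iff]
  constructor
  · rintro ⟨h1, h2⟩; exact ⟨h1.symm, fun j hj => (h2 j hj).symm⟩
  · rintro ⟨h1, h2⟩; exact ⟨h1.symm, fun j hj => (h2 j hj).symm⟩

lemma HP_apply (n : ℕ) (J : Matrix (Fin n) (Fin n) ℝ) (b : Fin n → ℝ) (x y : Fin n → Fin 2) :
    HP n J b x y = if x = y then isingCost n J b (sv n x) else 0 := by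
  have hmul : ∀ i j : Fin n, (sigZi n i * sigZi n j) x y
      = if x = y then sv n x i * sv n x j else 0 := by
    intro i j
    rw [Matrix.mul_apply]
    rw [Finset.sum_eq_single x]
    · rw [sigZi_apply, if_pos rfl, sigZi_apply]
      by_cases hxy : x = y
      · subst hxy; simp
      · rw [if_neg hxy, if_neg hxy, mul_zero]
    · intro z _ hz
      rw [sigZi_apply, if_neg (Ne.symm hz), zero_mul]
    · intro h; exact absurd (Finset.mem_univ x) h
  rw [HP]
  simp only [Matrix.add_apply, Matrix.sum_apply, Matrix.smul_apply, smul_eq_mul]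
  by_cases hxy : x = y
  · subst hxy
    rw [if_pos rfl, isingCost]
    simp only [hmul, sigZi_apply, eq_self_iff_true, if_true]
    rw [dotProduct, dotProduct]
    congr 1
    · refine Finset.sum_congr rfl fun i _ => ?_
      rw [Matrix.mulVec, dotProduct, Finset.mul_sum]
      refine Finset.sum_congr rfl fun j _ => by ring
  · rw [if_neg hxy]
    simp only [hmul, sigZi_apply, if_neg hxy, mul_zero]
    simp

lemma Hmat_apply (n : ℕ) (J : Matrix (Fin n) (Fin n) ℝ) (b : Fin n → ℝ) (κ : ℝ)
    (f : ℝ → ℝ) (t : ℝ) (x y : Fin n → Fin 2) :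
    Hmat n J b κ f t x y = -((1 - f t) * κ * ∑ i, sigXi n i x y)
      + f t * (if x = y then isingCost n J b (sv n x) else 0) := by
  rw [Hmat, HI]
  simp only [Matrix.add_apply, Matrix.smul_apply, Matrix.neg_apply, Matrix.sum_apply,
    smul_eq_mul, HP_apply]
  ring


lemma sv_inj (n : ℕ) {x y : Fin n → Fin 2} (h : sv n x = sv n y) : x = y := by
  have hFin : ∀ a : Fin 2, a ≠ 0 → a = 1 := by decide
  funext i
  have hi := congrFun h i
  simp only [sv] at hi
  by_cases h1 : x i = 0 <;> by_cases h2 : y i = 0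
  · rw [h1, h2]
  · rw [if_pos h1, if_neg h2] at hi; norm_num at hi
  · rw [if_neg h1, if_pos h2] at hi; norm_num at hi
  · rw [hFin _ h1, hFin _ h2]

lemma sum_sigXi_nonneg (n : ℕ) (x y : Fin n → Fin 2) :
    0 ≤ ∑ i, sigXi n i x y := by
  refine Finset.sum_nonneg fun i _ => ?_
  rw [sigXi_apply]
  split <;> norm_num

lemma sum_sigXi_adj (n : ℕ) (x y : Fin n → Fin 2) (j : Fin n)
    (hj : x j ≠ y j) (hrest : ∀ j', j' ≠ j → x j' = y j') :
    ∑ i, sigXi n i x y = 1 := by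
  rw [Finset.sum_eq_single j]
  · rw [sigXi_apply, if_pos ⟨hj, hrest⟩]
  · intro i _ hij
    rw [sigXi_apply, if_neg]
    rintro ⟨h1, _⟩
    exact h1 (hrest i hij)
  · intro h; exact absurd (Finset.mem_univ j) h

lemma Hmat_herm (n : ℕ) (J : Matrix (Fin n) (Fin n) ℝ) (b : Fin n → ℝ) (κ : ℝ)
    (f : ℝ → ℝ) (t : ℝ) : (Hmat n J b κ f t).IsHermitian := by
  rw [Matrix.IsHermitian]
  ext x y
  rw [Matrix.conjTranspose_apply, star_trivial, Hmat_apply, Hmat_apply]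
  have hs : ∑ i, sigXi n i y x = ∑ i, sigXi n i x y :=
    Finset.sum_congr rfl fun i _ => sigXi_symm n i y x
  rw [hs]
  by_cases h : x = y
  · subst h; rfl
  · rw [if_neg (fun hh => h hh.symm), if_neg h]

/-- **No crossing of eigenvalues.** If the Ising cost has a unique minimizer over
`{−1,+1}ⁿ`, `κ > 0`, and `f : [0,T] → [0,1]` is continuous, monotone non-decreasing with
`f 0 = 0`, `f T = 1` and `f t < 1` for `t < T`, then for every `t ∈ [0,T]` the matrix
`H(t) = (1 − f(t)) H_I + f(t) H_P` is (real) symmetric/Hermitian and its smallest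
eigenvalue is simple: listing its eigenvalues with multiplicity, the minimum is attained
at exactly one index, i.e. `λ₁(t) < λ₂(t)`. -/
theorem no_crossing_of_eigenvalues (n : ℕ) (hn : 1 ≤ n)
    (J : Matrix (Fin n) (Fin n) ℝ) (b : Fin n → ℝ)
    (huniq : ∃! s : Fin n → ℝ, (∀ i, s i = 1 ∨ s i = -1) ∧
      ∀ s' : Fin n → ℝ, (∀ i, s' i = 1 ∨ s' i = -1) →
        isingCost n J b s ≤ isingCost n J b s')
    (κ : ℝ) (hκ : 0 < κ) (T : ℝ) (hT : 0 < T) (f : ℝ → ℝ)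
    (hf_cont : ContinuousOn f (Set.Icc 0 T))
    (hf_mono : MonotoneOn f (Set.Icc 0 T))
    (hf_range : ∀ t ∈ Set.Icc 0 T, f t ∈ Set.Icc (0 : ℝ) 1)
    (hf0 : f 0 = 0) (hfT : f T = 1)
    (hf_lt : ∀ t ∈ Set.Ico 0 T, f t < 1) :
    ∀ t ∈ Set.Icc 0 T, ∃ hH : (Hmat n J b κ f t).IsHermitian,
      ∃! x : Fin n → Fin 2, ∀ y : Fin n → Fin 2, hH.eigenvalues x ≤ hH.eigenvalues y := by
  intro t ht
  obtain ⟨ht0, htT⟩ := ht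
  have hft01 := hf_range t ⟨ht0, htT⟩
  have hft0 : 0 ≤ f t := hft01.1
  have hft1 : f t ≤ 1 := hft01.2
  have hH : (Hmat n J b κ f t).IsHermitian := Hmat_herm n J b κ f t
  refine ⟨hH, ?_⟩
  set A := Hmat n J b κ f t with hAdef
  obtain ⟨i₀, hmin⟩ := Finite.exists_min hH.eigenvalues
  set lam := hH.eigenvalues i₀ with hlamdef
  apply unique_min_of_dep A hH i₀ hmin
  rcases eq_or_lt_of_le htT with hTeq | hTlt
  · -- t = T : the matrix is diagonal
    have hAHP : A = HP n J b := by
      rw [hAdef, Hmat, hTeq, hfT]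
      simp
    set d : (Fin n → Fin 2) → ℝ := fun x => isingCost n J b (sv n x) with hddef
    have hd : ∀ x y, A x y = if x = y then d x else 0 := by
      intro x y; rw [hAHP, HP_apply]
    have hlamle : ∀ x, lam ≤ d x := by
      intro x
      have h := rayleigh_le A hH lam hmin (fun z => if z = x then (1 : ℝ) else 0)
      have hsum1 : ∑ z, (if z = x then (1 : ℝ) else 0) ^ 2 = 1 := by
        rw [Finset.sum_eq_single x]
        · rw [if_pos rfl]; norm_num
        · intro z _ hz; rw [if_neg hz]; norm_num
        · intro h'; exact absurd (Finset.mem_univ x) h'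
      have hsum2 : ∑ z, (if z = x then (1 : ℝ) else 0)
          * (A *ᵥ fun z => if z = x then (1 : ℝ) else 0) z = d x := by
        rw [Finset.sum_eq_single x]
        · rw [if_pos rfl, one_mul]
          show ∑ y, A x y * (if y = x then (1:ℝ) else 0) = d x
          rw [Finset.sum_eq_single x]
          · rw [if_pos rfl, mul_one, hd, if_pos rfl]
          · intro y _ hy; rw [if_neg hy, mul_zero]
          · intro h'; exact absurd (Finset.mem_univ x) h'
        · intro z _ hz; rw [if_neg hz, zero_mul]
        · intro h'; exact absurd (Finset.mem_univ x) h'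
      rw [hsum1, hsum2, mul_one] at h
      exact h
    have hex : ∃ x, d x = lam := by
      have hv : A *ᵥ (fun x => hH.eigenvectorBasis i₀ x)
          = lam • (fun x => hH.eigenvectorBasis i₀ x) := hH.mulVec_eigenvectorBasis i₀
      have hvne : ∃ x, hH.eigenvectorBasis i₀ x ≠ 0 := by
        by_contra hall
        push_neg at hall
        have h1 := ortho_sum A hH i₀ i₀
        rw [if_pos rfl] at h1
        have : ∑ x, hH.eigenvectorBasis i₀ x * hH.eigenvectorBasis i₀ x = 0 :=
          Finset.sum_eq_zero fun x _ => by rw [hall x, mul_zero]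
        rw [this] at h1
        exact one_ne_zero h1.symm
      obtain ⟨x, hx⟩ := hvne
      refine ⟨x, ?_⟩
      have h1 : (A *ᵥ fun x => hH.eigenvectorBasis i₀ x) x
          = lam * hH.eigenvectorBasis i₀ x := congrFun hv x
      have h2 : (A *ᵥ fun x => hH.eigenvectorBasis i₀ x) x
          = d x * hH.eigenvectorBasis i₀ x := by
        show ∑ y, A x y * hH.eigenvectorBasis i₀ y = _
        rw [Finset.sum_eq_single x]
        · rw [hd, if_pos rfl]
        · intro y _ hy; rw [hd, if_neg (fun h => hy h.symm), zero_mul]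
        · intro h'; exact absurd (Finset.mem_univ x) h'
      exact mul_right_cancel₀ hx (h2.symm.trans h1)
    obtain ⟨xs, hxs⟩ := hex
    obtain ⟨s₀, ⟨hs₀sign, hs₀min⟩, hs₀uniq⟩ := huniq
    have hkey : ∀ x, d x = lam → sv n x = s₀ := by
      intro x hdx
      apply hs₀uniq
      constructor
      · intro i
        by_cases h : x i = 0 <;> simp [sv, h]
      · intro s' hs'
        set x' : Fin n → Fin 2 := fun i => if s' i = 1 then 0 else 1 with hx'def
        have hsx' : sv n x' = s' := by
          funext i
          rcases hs' i with h | h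
          · simp only [sv, hx'def, h, if_pos rfl]
            norm_num
          · have hne1 : s' i ≠ 1 := by rw [h]; norm_num
            simp only [sv, hx'def, if_neg hne1]
            norm_num [h]
        have : isingCost n J b (sv n x) = d x := rfl
        rw [this, hdx, ← hsx']
        exact hlamle x'
    have hstrict : ∀ x, x ≠ xs → lam < d x := by
      intro x hx
      rcases lt_or_eq_of_le (hlamle x) with h | h
      · exact h
      · exfalso
        have h1 : sv n x = s₀ := hkey x h.symm
        have h2 : sv n xs = s₀ := hkey xs hxs
        exact hx (sv_inj n (h1.trans h2.symm))
    exact dep_diag A d hd lam xs hstrict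
  · -- t < T : Perron–Frobenius argument
    have hftlt : f t < 1 := hf_lt t ⟨ht0, hTlt⟩
    have hε : 0 < (1 - f t) * κ := mul_pos (by linarith) hκ
    have hoff : ∀ x y, x ≠ y → A x y ≤ 0 := by
      intro x y hxy
      rw [hAdef, Hmat_apply, if_neg hxy, mul_zero, add_zero, neg_nonpos]
      exact mul_nonneg (le_of_lt hε) (sum_sigXi_nonneg n x y)
    have hconn : ∀ v : (Fin n → Fin 2) → ℝ, (∀ x, 0 ≤ v x) →
        A *ᵥ v = lam • v → (∃ x, v x = 0) → v = 0 := by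
      rintro v hvpos hveig ⟨x₀, hx₀⟩
      have step : ∀ x, v x = 0 → ∀ (j : Fin n) (c : Fin 2), c ≠ x j →
          v (Function.update x j c) = 0 := by
        intro x hx j c hc
        set y := Function.update x j c with hy
        have hxy : x ≠ y := by
          intro h
          have := congrFun h j
          rw [hy, Function.update_self] at this
          exact hc this.symm
        have hAxy : A x y = -((1 - f t) * κ) := by
          rw [hAdef, Hmat_apply, if_neg hxy, mul_zero, add_zero]
          rw [sum_sigXi_adj n x y j
            (by rw [hy, Function.update_self]; exact fun h => hc h.symm)
            (fun j' hj' => by rw [hy, Function.update_of_ne hj'])]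
          ring
        have hsum : ∑ z, A x z * v z = 0 := by
          have h1 : (A *ᵥ v) x = lam * v x := congrFun hveig x
          have h2 : (A *ᵥ v) x = ∑ z, A x z * v z := rfl
          rw [h2, hx, mul_zero] at h1
          exact h1
        have hterms : ∀ z ∈ Finset.univ, A x z * v z ≤ 0 := by
          intro z _
          by_cases hz : z = x
          · rw [hz, hx, mul_zero]
          · exact mul_nonpos_iff.mpr (Or.inr ⟨hoff x z (fun h => hz h.symm), hvpos z⟩)
        have hzero := (Finset.sum_eq_zero_iff_of_nonpos hterms).mp hsum y (Finset.mem_univ y)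
        rcases mul_eq_zero.mp hzero with h | h
        · exfalso; rw [hAxy] at h; linarith
        · exact h
      have main : ∀ (k : ℕ) (y : Fin n → Fin 2),
          (Finset.univ.filter fun j => ¬ x₀ j = y j).card ≤ k → v y = 0 := by
        intro k
        induction k with
        | zero =>
          intro y hcard
          have hempty : (Finset.univ.filter fun j => ¬ x₀ j = y j) = ∅ :=
            Finset.card_eq_zero.mp (Nat.le_zero.mp hcard)
          have hyx : y = x₀ := by
            funext j
            by_contra hj
            have hmem : j ∈ (Finset.univ.filter fun j => ¬ x₀ j = y j) :=
              Finset.mem_filter.mpr ⟨Finset.mem_univ j, fun h => hj h.symm⟩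
            rw [hempty] at hmem
            exact absurd hmem (Finset.notMem_empty j)
          rw [hyx]; exact hx₀
        | succ k ih =>
          intro y hcard
          by_cases hle : (Finset.univ.filter fun j => ¬ x₀ j = y j).card ≤ k
          · exact ih y hle
          · have hpos : 0 < (Finset.univ.filter fun j => ¬ x₀ j = y j).card := by omega
            obtain ⟨j, hj⟩ := Finset.card_pos.mp hpos
            have hjmem := (Finset.mem_filter.mp hj).2
            set y' := Function.update y j (x₀ j) with hy'
            have hcard' : (Finset.univ.filter fun j' => ¬ x₀ j' = y' j').card ≤ k := by
              have hsub : (Finset.univ.filter fun j' => ¬ x₀ j' = y' j')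
                  ⊆ (Finset.univ.filter fun j' => ¬ x₀ j' = y j').erase j := by
                intro j' hj'
                have h2 := (Finset.mem_filter.mp hj').2
                have hjj : j' ≠ j := by
                  intro h
                  rw [h, hy', Function.update_self] at h2
                  exact h2 rfl
                rw [hy', Function.update_of_ne hjj] at h2
                exact Finset.mem_erase.mpr
                  ⟨hjj, Finset.mem_filter.mpr ⟨Finset.mem_univ _, h2⟩⟩
              calc (Finset.univ.filter fun j' => ¬ x₀ j' = y' j').card
                  ≤ ((Finset.univ.filter fun j' => ¬ x₀ j' = y j').erase j).card :=
                    Finset.card_le_card hsub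
                _ = (Finset.univ.filter fun j' => ¬ x₀ j' = y j').card - 1 :=
                    Finset.card_erase_of_mem hj
                _ ≤ k := by omega
            have hvy' := ih y' hcard'
            have hstep : v (Function.update y' j (y j)) = 0 := by
              refine step y' hvy' j (y j) ?_
              rw [hy', Function.update_self]
              exact fun h => hjmem h.symm
            have hupd : Function.update y' j (y j) = y := by
              funext j''
              by_cases h : j'' = j
              · rw [h, Function.update_self]
              · rw [Function.update_of_ne h, hy', Function.update_of_ne h]
            rwa [hupd] at hstep
      funext y
      exact main _ y le_rfl
    exact dep_of_conn A hH lam hmin hoff hconn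
end

section
/- (Positive minimal spectral gap.) Under the hypotheses of the no-crossing theorem — n ≥ 1, J ∈ ℝ^{n×n}, b ∈ ℝⁿ with a unique minimizer of s ↦ sᵀ J s + bᵀ s over {−1,+1}ⁿ, κ > 0, H_I = −κ Σ_i σ_i^x, H_P = Σ_{i,j} J_{ij} σ_i^z σ_j^z + Σ_i b_i σ_i^z, T > 0, f : [0,T] → [0,1] continuous monotone non-decreasing with f(0) = 0, f(T) = 1 and f(t) < 1 for t < T, H(t) = (1 − f(t)) H_I + f(t) H_P — the minimal spectral gap over the whole evolution is strictly positive: inf_{t ∈ [0,T]} (λ₂(t) − λ₁(t)) > 0, where λ₁(t) ≤ λ₂(t) ≤ ⋯ are the eigenvalues of H(t) with multiplicity in non-decreasing order. -/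
open Matrix BigOperators

open Matrix BigOperators

namespace PMSG

open Matrix Finset

variable {ι : Type*} [Fintype ι] [DecidableEq ι]

noncomputable def qf (A : Matrix ι ι ℝ) (v : ι → ℝ) : ℝ := v ⬝ᵥ (A *ᵥ v)

noncomputable def eb (A : Matrix ι ι ℝ) : ℝ := ∑ p, ∑ q, |A p q|

lemma eb_nonneg (A : Matrix ι ι ℝ) : 0 ≤ eb A :=
  Finset.sum_nonneg fun p _ => Finset.sum_nonneg fun q _ => abs_nonneg _

lemma eb_smul (c : ℝ) (A : Matrix ι ι ℝ) : eb (c • A) = |c| * eb A := by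
  unfold eb
  rw [Finset.mul_sum]
  refine Finset.sum_congr rfl fun p _ => ?_
  rw [Finset.mul_sum]
  refine Finset.sum_congr rfl fun q _ => ?_
  rw [Matrix.smul_apply, smul_eq_mul, abs_mul]

lemma qf_eq_sum (A : Matrix ι ι ℝ) (v : ι → ℝ) :
    qf A v = ∑ p, ∑ q, v p * (A p q * v q) := by
  simp only [qf, dotProduct, Matrix.mulVec, Finset.mul_sum]

lemma qf_add (A B : Matrix ι ι ℝ) (v : ι → ℝ) : qf (A + B) v = qf A v + qf B v := by
  unfold qf; rw [Matrix.add_mulVec, dotProduct_add]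

lemma abs_qf_le (A : Matrix ι ι ℝ) (v : ι → ℝ) : |qf A v| ≤ eb A * (v ⬝ᵥ v) := by
  have hS : ∀ p, v p ^ 2 ≤ v ⬝ᵥ v := by
    intro p
    have h := Finset.single_le_sum (f := fun q => v q * v q)
      (fun q _ => mul_self_nonneg _) (Finset.mem_univ p)
    simpa [dotProduct, pow_two] using h
  rw [qf_eq_sum]
  calc |∑ p, ∑ q, v p * (A p q * v q)|
      ≤ ∑ p, |∑ q, v p * (A p q * v q)| := Finset.abs_sum_le_sum_abs _ _
    _ ≤ ∑ p, ∑ q, |v p * (A p q * v q)| :=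
        Finset.sum_le_sum fun p _ => Finset.abs_sum_le_sum_abs _ _
    _ ≤ ∑ p, ∑ q, |A p q| * (v ⬝ᵥ v) := by
        refine Finset.sum_le_sum fun p _ => Finset.sum_le_sum fun q _ => ?_
        have h1 := hS p; have h2 := hS q
        have habs : |v p * (A p q * v q)| = |A p q| * |v p * v q| := by
          rw [abs_mul, abs_mul, abs_mul]; ring
        rw [habs]
        refine mul_le_mul_of_nonneg_left ?_ (abs_nonneg _)
        rcases abs_cases (v p * v q) with ⟨he, _⟩ | ⟨he, _⟩ <;> rw [he] <;>
          nlinarith [sq_nonneg (v p - v q), sq_nonneg (v p + v q)]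
    _ = eb A * (v ⬝ᵥ v) := by
        rw [eb, Finset.sum_mul]
        exact Finset.sum_congr rfl fun p _ => (Finset.sum_mul _ _ _).symm

lemma sum_dotProduct' {κ : Type*} (s : Finset κ) (f : κ → ι → ℝ) (v : ι → ℝ) :
    (∑ i ∈ s, f i) ⬝ᵥ v = ∑ i ∈ s, f i ⬝ᵥ v := by
  unfold dotProduct
  rw [Finset.sum_comm]
  refine Finset.sum_congr rfl fun p _ => ?_
  rw [Finset.sum_apply, Finset.sum_mul]

lemma dotProduct_sum' {κ : Type*} (s : Finset κ) (v : ι → ℝ) (f : κ → ι → ℝ) :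
    v ⬝ᵥ (∑ i ∈ s, f i) = ∑ i ∈ s, v ⬝ᵥ f i := by
  unfold dotProduct
  rw [Finset.sum_comm]
  refine Finset.sum_congr rfl fun p _ => ?_
  rw [Finset.sum_apply, Finset.mul_sum]

section eig

variable {A : Matrix ι ι ℝ} (hA : A.IsHermitian)

noncomputable def evec (i : ι) : ι → ℝ := ⇑(hA.eigenvectorBasis i)

lemma evec_orth (i j : ι) : evec hA i ⬝ᵥ evec hA j = if i = j then 1 else 0 := by
  have h0 := hA.eigenvectorBasis.orthonormal
  rw [orthonormal_iff_ite] at h0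
  have h := h0 i j
  rw [PiLp.inner_apply] at h
  simpa [evec, dotProduct, RCLike.inner_apply, mul_comm] using h

lemma evec_mulVec (i : ι) : A *ᵥ evec hA i = hA.eigenvalues i • evec hA i :=
  hA.mulVec_eigenvectorBasis i

lemma evec_repr (v : ι → ℝ) : v = ∑ i, (evec hA i ⬝ᵥ v) • evec hA i := by
  have h : (∑ i, (inner ℝ (hA.eigenvectorBasis i) (WithLp.toLp 2 v : EuclideanSpace ℝ ι) : ℝ)
      • ⇑(hA.eigenvectorBasis i) : ι → ℝ) = v := by
    have := congrArg WithLp.ofLp (hA.eigenvectorBasis.sum_repr' (WithLp.toLp 2 v : EuclideanSpace ℝ ι))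
    simpa using this
  conv_lhs => rw [← h]
  refine Finset.sum_congr rfl fun i _ => ?_
  congr 1
  rw [PiLp.inner_apply]
  simp [evec, dotProduct, RCLike.inner_apply, mul_comm]

lemma dot_sum_sum (c d : ι → ℝ) :
    (∑ i, c i • evec hA i) ⬝ᵥ (∑ j, d j • evec hA j) = ∑ i, c i * d i := by
  rw [sum_dotProduct']
  refine Finset.sum_congr rfl fun i _ => ?_
  rw [dotProduct_sum']
  rw [Finset.sum_eq_single i]
  · rw [smul_dotProduct, dotProduct_smul, evec_orth hA, if_pos rfl]
    simp
  · intro j _ hj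
    rw [smul_dotProduct, dotProduct_smul, evec_orth hA, if_neg (Ne.symm hj)]
    simp
  · intro h; exact absurd (Finset.mem_univ i) h

lemma mulVec_esum (c : ι → ℝ) :
    A *ᵥ (∑ i, c i • evec hA i) = ∑ i, (c i * hA.eigenvalues i) • evec hA i := by
  have h1 : A *ᵥ (∑ i, c i • evec hA i) = ∑ i, c i • (A *ᵥ evec hA i) := by
    rw [← Matrix.mulVecLin_apply, map_sum]
    refine Finset.sum_congr rfl fun i _ => ?_
    rw [_root_.map_smul, Matrix.mulVecLin_apply]
  rw [h1]
  refine Finset.sum_congr rfl fun i _ => ?_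
  rw [evec_mulVec, smul_smul]

lemma qf_esum (c : ι → ℝ) :
    qf A (∑ i, c i • evec hA i) = ∑ i, hA.eigenvalues i * c i ^ 2 := by
  unfold qf
  rw [mulVec_esum hA, dot_sum_sum hA]
  exact Finset.sum_congr rfl fun i _ => by ring

variable [Nonempty ι]

noncomputable def lam1 : ℝ := Finset.univ.inf' Finset.univ_nonempty hA.eigenvalues

noncomputable def lam2 (h2 : (Finset.univ : Finset ι).offDiag.Nonempty) : ℝ :=
  (Finset.univ : Finset ι).offDiag.inf' h2
    fun p => max (hA.eigenvalues p.1) (hA.eigenvalues p.2)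

lemma lam1_le (i : ι) : lam1 hA ≤ hA.eigenvalues i :=
  Finset.inf'_le _ (Finset.mem_univ i)

lemma exists_lam1 : ∃ i, lam1 hA = hA.eigenvalues i := by
  obtain ⟨i, _, h⟩ := Finset.exists_mem_eq_inf' (Finset.univ_nonempty) hA.eigenvalues
  exact ⟨i, h⟩

lemma lam1_eq_iInf : lam1 hA = ⨅ i, hA.eigenvalues i := by
  refine le_antisymm (le_ciInf fun i => lam1_le hA i) ?_
  obtain ⟨i, hi⟩ := exists_lam1 hA
  exact (ciInf_le (Set.Finite.bddBelow (Set.finite_range _)) i).trans hi.ge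

lemma lam2_le (h2 : (Finset.univ : Finset ι).offDiag.Nonempty) {x y : ι} (hxy : x ≠ y) :
    lam2 hA h2 ≤ max (hA.eigenvalues x) (hA.eigenvalues y) := by
  have hmem : ((x, y) : ι × ι) ∈ (Finset.univ : Finset ι).offDiag :=
    Finset.mem_offDiag.2 ⟨Finset.mem_univ _, Finset.mem_univ _, hxy⟩
  exact Finset.inf'_le _ hmem

lemma exists_lam2 (h2 : (Finset.univ : Finset ι).offDiag.Nonempty) :
    ∃ x y : ι, x ≠ y ∧ lam2 hA h2 = max (hA.eigenvalues x) (hA.eigenvalues y) := by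
  obtain ⟨p, hp, h⟩ := Finset.exists_mem_eq_inf' h2
    (fun p : ι × ι => max (hA.eigenvalues p.1) (hA.eigenvalues p.2))
  exact ⟨p.1, p.2, (Finset.mem_offDiag.1 hp).2.2, h⟩

lemma qf_evec (i : ι) : qf A (evec hA i) = hA.eigenvalues i := by
  unfold qf
  rw [evec_mulVec, dotProduct_smul, evec_orth hA, if_pos rfl]
  simp

lemma lam1_rayleigh (v : ι → ℝ) : lam1 hA * (v ⬝ᵥ v) ≤ qf A v := by
  have hv := evec_repr hA v
  rw [hv, qf_esum hA, dot_sum_sum hA, Finset.mul_sum]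
  refine Finset.sum_le_sum fun i _ => ?_
  have h1 := lam1_le hA i
  nlinarith [sq_nonneg (evec hA i ⬝ᵥ v)]

lemma ground (v : ι → ℝ) (h : qf A v = lam1 hA * (v ⬝ᵥ v)) : A *ᵥ v = lam1 hA • v := by
  set m := lam1 hA with hm
  set c : ι → ℝ := fun i => evec hA i ⬝ᵥ v with hc
  have hv : v = ∑ i, c i • evec hA i := evec_repr hA v
  have h1 : qf A v = ∑ i, hA.eigenvalues i * c i ^ 2 := by rw [hv, qf_esum hA]
  have h2 : v ⬝ᵥ v = ∑ i, c i * c i := by rw [hv, dot_sum_sum hA]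
  have h' : ∑ i, (hA.eigenvalues i - m) * c i ^ 2 = 0 := by
    have e1 : ∑ i, (hA.eigenvalues i - m) * c i ^ 2
        = (∑ i, hA.eigenvalues i * c i ^ 2) - m * ∑ i, c i * c i := by
      rw [Finset.mul_sum, ← Finset.sum_sub_distrib]
      exact Finset.sum_congr rfl fun i _ => by ring
    rw [e1, ← h1, ← h2, h]
    ring
  have hz : ∀ i, (hA.eigenvalues i - m) * c i ^ 2 = 0 := by
    intro i
    exact (Finset.sum_eq_zero_iff_of_nonneg fun j _ =>
      mul_nonneg (sub_nonneg.2 (lam1_le hA j)) (sq_nonneg _)).1 h' i (Finset.mem_univ i)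
  have key : ∀ i, c i * hA.eigenvalues i = m * c i := by
    intro i
    by_cases hci : c i = 0
    · rw [hci]; ring
    · have h3 : hA.eigenvalues i - m = 0 :=
        (mul_eq_zero.1 (hz i)).resolve_right (pow_ne_zero _ hci)
      have h4 : hA.eigenvalues i = m := by linarith
      rw [h4]; ring
  calc A *ᵥ v = ∑ i, (c i * hA.eigenvalues i) • evec hA i := by rw [hv, mulVec_esum hA]
    _ = ∑ i, (m * c i) • evec hA i := by
        exact Finset.sum_congr rfl fun i _ => by rw [key i]
    _ = m • v := by
        rw [hv, Finset.smul_sum]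
        exact Finset.sum_congr rfl fun i _ => by rw [smul_smul]

lemma rayleigh_ge_of_orth (i0 : ι) (w : ι → ℝ) (h0 : evec hA i0 ⬝ᵥ w = 0) (c0 : ℝ)
    (hc : ∀ i, i ≠ i0 → c0 ≤ hA.eigenvalues i) : c0 * (w ⬝ᵥ w) ≤ qf A w := by
  set c : ι → ℝ := fun i => evec hA i ⬝ᵥ w with hcdef
  have hv : w = ∑ i, c i • evec hA i := evec_repr hA w
  have hc0 : c i0 = 0 := h0
  rw [hv, qf_esum hA, dot_sum_sum hA, Finset.mul_sum]
  refine Finset.sum_le_sum fun i _ => ?_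
  by_cases hi : i = i0
  · subst hi; rw [hc0]; simp
  · have h1 := hc i hi
    nlinarith [sq_nonneg (c i)]

lemma exists_combo (p q : ℝ) : ∃ a b : ℝ, a ^ 2 + b ^ 2 = 1 ∧ a * p + b * q = 0 := by
  by_cases h : p = 0 ∧ q = 0
  · exact ⟨1, 0, by norm_num, by rw [h.1, h.2]; ring⟩
  · have hpq : 0 < p ^ 2 + q ^ 2 := by
      rcases not_and_or.1 h with h' | h' <;> positivity
    have hs : Real.sqrt (p ^ 2 + q ^ 2) ^ 2 = p ^ 2 + q ^ 2 := Real.sq_sqrt hpq.le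
    have hs0 : Real.sqrt (p ^ 2 + q ^ 2) ≠ 0 := by
      have := Real.sqrt_pos.2 hpq; linarith
    refine ⟨q / Real.sqrt (p ^ 2 + q ^ 2), -p / Real.sqrt (p ^ 2 + q ^ 2), ?_, by ring⟩
    field_simp
    linarith [hs]

lemma small_witness (x y : ι) (hxy : x ≠ y) (e' : ι → ℝ) :
    ∃ w : ι → ℝ, w ⬝ᵥ w = 1 ∧ e' ⬝ᵥ w = 0 ∧
      qf A w ≤ max (hA.eigenvalues x) (hA.eigenvalues y) := by
  obtain ⟨a, b, hab, hob⟩ := exists_combo (e' ⬝ᵥ evec hA x) (e' ⬝ᵥ evec hA y)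
  refine ⟨a • evec hA x + b • evec hA y, ?_, ?_, ?_⟩
  · rw [add_dotProduct, smul_dotProduct, smul_dotProduct,
      dotProduct_add, dotProduct_add, dotProduct_smul,
      dotProduct_smul, dotProduct_smul, dotProduct_smul,
      evec_orth hA, evec_orth hA, evec_orth hA, evec_orth hA,
      if_pos rfl, if_pos rfl, if_neg hxy, if_neg (Ne.symm hxy)]
    simp only [smul_eq_mul, mul_zero, mul_one]
    nlinarith [hab]
  · rw [dotProduct_add, dotProduct_smul, dotProduct_smul]
    simp only [smul_eq_mul]
    exact hob
  · have hmul : A *ᵥ (a • evec hA x + b • evec hA y)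
        = (a * hA.eigenvalues x) • evec hA x + (b * hA.eigenvalues y) • evec hA y := by
      rw [Matrix.mulVec_add, Matrix.mulVec_smul, Matrix.mulVec_smul,
        evec_mulVec hA, evec_mulVec hA, smul_smul, smul_smul]
    unfold qf
    rw [hmul, add_dotProduct, smul_dotProduct, smul_dotProduct,
      dotProduct_add, dotProduct_add, dotProduct_smul,
      dotProduct_smul, dotProduct_smul, dotProduct_smul,
      evec_orth hA, evec_orth hA, evec_orth hA, evec_orth hA,
      if_pos rfl, if_pos rfl, if_neg hxy, if_neg (Ne.symm hxy)]
    simp only [smul_eq_mul, mul_zero, mul_one, add_zero, zero_add]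
    have hmx := le_max_left (hA.eigenvalues x) (hA.eigenvalues y)
    have hmy := le_max_right (hA.eigenvalues x) (hA.eigenvalues y)
    have e1 := mul_le_mul_of_nonneg_left hmx (sq_nonneg a)
    have e2 := mul_le_mul_of_nonneg_left hmy (sq_nonneg b)
    have e3 : a ^ 2 * max (hA.eigenvalues x) (hA.eigenvalues y)
        + b ^ 2 * max (hA.eigenvalues x) (hA.eigenvalues y)
        = max (hA.eigenvalues x) (hA.eigenvalues y) := by
      rw [← add_mul, hab, one_mul]
    nlinarith [e1, e2, e3]

end eig

section weyl

variable [Nonempty ι] {A B : Matrix ι ι ℝ}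

lemma weyl_lam1 (hA : A.IsHermitian) (hB : B.IsHermitian) :
    lam1 hB ≤ lam1 hA + eb (B - A) := by
  obtain ⟨i0, hi0⟩ := exists_lam1 hA
  have h1 : lam1 hB * (evec hA i0 ⬝ᵥ evec hA i0) ≤ qf B (evec hA i0) := lam1_rayleigh hB _
  rw [evec_orth hA, if_pos rfl, mul_one] at h1
  have h2 : qf B (evec hA i0) = qf A (evec hA i0) + qf (B - A) (evec hA i0) := by
    rw [← qf_add]
    congr 1
    abel
  have h3 : qf A (evec hA i0) = hA.eigenvalues i0 := qf_evec hA i0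
  have h4 := abs_qf_le (B - A) (evec hA i0)
  rw [evec_orth hA, if_pos rfl, mul_one] at h4
  have h5 := (abs_le.1 h4).2
  rw [h2, h3] at h1
  rw [hi0]
  linarith

lemma weyl_lam2 (hA : A.IsHermitian) (hB : B.IsHermitian)
    (h2 : (Finset.univ : Finset ι).offDiag.Nonempty) :
    lam2 hB h2 ≤ lam2 hA h2 + eb (B - A) := by
  obtain ⟨i0, hi0⟩ := exists_lam1 hB
  obtain ⟨x, y, hxy, hval⟩ := exists_lam2 hA h2
  obtain ⟨w, hw1, hw0, hwq⟩ := small_witness hA x y hxy (evec hB i0)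
  have hc : ∀ i, i ≠ i0 → lam2 hB h2 ≤ hB.eigenvalues i := by
    intro i hi
    have h := lam2_le hB h2 (Ne.symm hi)
    have hle : hB.eigenvalues i0 ≤ hB.eigenvalues i := hi0 ▸ lam1_le hB i
    rwa [max_eq_right hle] at h
  have h5 := rayleigh_ge_of_orth hB i0 w hw0 (lam2 hB h2) hc
  rw [hw1, mul_one] at h5
  have h6 : qf B w = qf A w + qf (B - A) w := by
    rw [← qf_add]; congr 1; abel
  have h7 := abs_qf_le (B - A) w
  rw [hw1, mul_one] at h7
  have h8 := (abs_le.1 h7).2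
  rw [h6] at h5
  rw [hval]
  linarith

end weyl

/-! ### Hypercube flips and connectivity -/

def flipv : Fin 2 → Fin 2 := fun a => if a = 0 then 1 else 0

lemma flipv_ne (a : Fin 2) : flipv a ≠ a := by fin_cases a <;> simp [flipv]

lemma eq_flipv_of_ne {a b : Fin 2} (h : b ≠ a) : b = flipv a := by
  fin_cases a <;> fin_cases b <;> simp_all [flipv]

def flipAt {n : ℕ} (x : Fin n → Fin 2) (i : Fin n) : Fin n → Fin 2 :=
  Function.update x i (flipv (x i))

lemma flipAt_ne {n : ℕ} (x : Fin n → Fin 2) (i : Fin n) : flipAt x i ≠ x := by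
  intro h
  have h2 := congrFun h i
  rw [flipAt, Function.update_self] at h2
  exact flipv_ne _ h2

lemma reach {n : ℕ} (P : (Fin n → Fin 2) → Prop)
    (hstep : ∀ x i, P x → P (flipAt x i)) {x : Fin n → Fin 2} (hx : P x)
    (y : Fin n → Fin 2) : P y := by
  suffices H : ∀ (d : ℕ) (x : Fin n → Fin 2),
      (Finset.univ.filter fun i => x i ≠ y i).card ≤ d → P x → P y from
    H _ x le_rfl hx
  intro d
  induction d with
  | zero =>
    intro x hcard hx
    have hall : ∀ i, x i = y i := by
      intro i
      by_contra hne
      have h1 : 0 < (Finset.univ.filter fun i => x i ≠ y i).card :=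
        Finset.card_pos.2 ⟨i, by simp [hne]⟩
      omega
    rwa [← funext hall]
  | succ d ih =>
    intro x hcard hx
    by_cases hxy : x = y
    · rwa [← hxy]
    · have hex : ∃ i, x i ≠ y i := by
        by_contra h; push_neg at h; exact hxy (funext h)
      obtain ⟨i, hi⟩ := hex
      have hyi : y i = flipv (x i) := eq_flipv_of_ne (Ne.symm hi)
      have hset : (Finset.univ.filter fun j => flipAt x i j ≠ y j)
          = (Finset.univ.filter fun j => x j ≠ y j).erase i := by
        ext j
        simp only [Finset.mem_filter, Finset.mem_erase, Finset.mem_univ, true_and]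
        constructor
        · intro hj
          have hji : j ≠ i := by
            rintro rfl
            exact hj (by rw [flipAt, Function.update_self, hyi])
          refine ⟨hji, ?_⟩
          rwa [flipAt, Function.update_of_ne hji] at hj
        · rintro ⟨hji, hj⟩
          rwa [flipAt, Function.update_of_ne hji]
      refine ih (flipAt x i) ?_ (hstep x i hx)
      rw [hset]
      have hmem : i ∈ Finset.univ.filter fun j => x j ≠ y j := by simp [hi]
      have hcpos : 0 < (Finset.univ.filter fun j => x j ≠ y j).card :=
        Finset.card_pos.2 ⟨i, hmem⟩
      rw [Finset.card_erase_of_mem hmem]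
      omega

/-! ### Perron-Frobenius style simplicity of the ground state -/

lemma pf_pos {n : ℕ} {A : Matrix (Fin n → Fin 2) (Fin n → Fin 2) ℝ} (hA : A.IsHermitian)
    (hoff : ∀ x y, x ≠ y → A x y ≤ 0) (hnb : ∀ x i, A x (flipAt x i) < 0)
    (v : (Fin n → Fin 2) → ℝ)
    (hv : A *ᵥ v = lam1 hA • v) (hv0 : v ≠ 0) : ∀ p, v p ≠ 0 := by
  set m := lam1 hA with hm
  set w : (Fin n → Fin 2) → ℝ := fun p => |v p| with hwdef
  have hww : w ⬝ᵥ w = v ⬝ᵥ v :=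
    Finset.sum_congr rfl fun p _ => abs_mul_abs_self _
  have hqv : qf A v = m * (v ⬝ᵥ v) := by
    unfold qf
    rw [hv, dotProduct_smul, smul_eq_mul]
  have hle : qf A w ≤ qf A v := by
    rw [qf_eq_sum, qf_eq_sum]
    refine Finset.sum_le_sum fun p _ => Finset.sum_le_sum fun q _ => ?_
    by_cases hpq : p = q
    · subst hpq
      have he : |v p| * (A p p * |v p|) = v p * (A p p * v p) := by
        have h0 : |v p| * |v p| = v p * v p := abs_mul_abs_self _
        linear_combination (A p p) * h0
      exact le_of_eq he
    · have h1 : A p q ≤ 0 := hoff p q hpq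
      have h2 : v p * v q ≤ |v p| * |v q| := by
        calc v p * v q ≤ |v p * v q| := le_abs_self _
          _ = |v p| * |v q| := abs_mul _ _
      have h3 := mul_le_mul_of_nonpos_left h2 h1
      calc |v p| * (A p q * |v q|) = A p q * (|v p| * |v q|) := by ring
        _ ≤ A p q * (v p * v q) := h3
        _ = v p * (A p q * v q) := by ring
  have hge : m * (w ⬝ᵥ w) ≤ qf A w := lam1_rayleigh hA w
  have hqw : qf A w = m * (w ⬝ᵥ w) := by
    rw [hww] at hge ⊢
    have h9 := hqv ▸ hle
    linarith
  have hAw : A *ᵥ w = m • w := ground hA w hqw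
  have hstep : ∀ q i, w q = 0 → w (flipAt q i) = 0 := by
    intro q i hq
    have h0 : ∑ p, A q p * w p = 0 := by
      have hc := congrFun hAw q
      have hc1 : (A *ᵥ w) q = ∑ p, A q p * w p := rfl
      have hc2 : (m • w) q = m * w q := rfl
      rw [hc1, hc2, hq, mul_zero] at hc
      exact hc
    have hterm : ∀ p ∈ Finset.univ, A q p * w p ≤ 0 := by
      intro p _
      by_cases hpq : p = q
      · rw [hpq, hq, mul_zero]
      · exact mul_nonpos_of_nonpos_of_nonneg (hoff q p (Ne.symm hpq)) (abs_nonneg _)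
    have hall := (Finset.sum_eq_zero_iff_of_nonpos hterm).1 h0
    have hfa := hall (flipAt q i) (Finset.mem_univ _)
    rcases mul_eq_zero.1 hfa with h | h
    · exact absurd h (hnb q i).ne
    · exact h
  intro p hp
  have hwp : w p = 0 := abs_eq_zero.2 hp
  have hally : ∀ y, w y = 0 := fun y => reach (fun z => w z = 0) hstep hwp y
  apply hv0
  funext q
  exact abs_eq_zero.1 (hally q)

lemma pf_simple {n : ℕ} {A : Matrix (Fin n → Fin 2) (Fin n → Fin 2) ℝ} (hA : A.IsHermitian)
    (hoff : ∀ x y, x ≠ y → A x y ≤ 0) (hnb : ∀ x i, A x (flipAt x i) < 0)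
    {x y : Fin n → Fin 2} (hxy : x ≠ y) :
    ¬(hA.eigenvalues x = lam1 hA ∧ hA.eigenvalues y = lam1 hA) := by
  rintro ⟨hx, hy⟩
  set m := lam1 hA with hm
  set u : (Fin n → Fin 2) → ℝ := evec hA x with hu
  set v : (Fin n → Fin 2) → ℝ := evec hA y with hvd
  have hAu : A *ᵥ u = m • u := by rw [hu, evec_mulVec hA, hx]
  have hAv : A *ᵥ v = m • v := by rw [hvd, evec_mulVec hA, hy]
  have hune : u ≠ 0 := by
    intro h
    have h1 := evec_orth hA x x
    rw [← hu, h, zero_dotProduct, if_pos rfl] at h1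
    norm_num at h1
  have hvne : v ≠ 0 := by
    intro h
    have h1 := evec_orth hA y y
    rw [← hvd, h, zero_dotProduct, if_pos rfl] at h1
    norm_num at h1
  have p0 : Fin n → Fin 2 := fun _ => 0
  have hup0 : u p0 ≠ 0 := pf_pos hA hoff hnb u hAu hune p0
  have hvp0 : v p0 ≠ 0 := pf_pos hA hoff hnb v hAv hvne p0
  set w : (Fin n → Fin 2) → ℝ := v p0 • u - u p0 • v with hwdef
  have hAw : A *ᵥ w = m • w := by
    rw [hwdef, Matrix.mulVec_sub, Matrix.mulVec_smul, Matrix.mulVec_smul, hAu, hAv]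
    funext p
    simp only [Pi.sub_apply, Pi.smul_apply, smul_eq_mul]
    ring
  have hwne : w ≠ 0 := by
    intro h
    have hdot : u ⬝ᵥ w = v p0 := by
      rw [hwdef, dotProduct_sub, dotProduct_smul, dotProduct_smul,
        hu, hvd, evec_orth hA, evec_orth hA, if_pos rfl, if_neg hxy]
      simp
    rw [h, dotProduct_zero] at hdot
    exact hvp0 hdot.symm
  have hwp0 : w p0 ≠ 0 := pf_pos hA hoff hnb w hAw hwne p0
  apply hwp0
  simp only [hwdef, Pi.sub_apply, Pi.smul_apply, smul_eq_mul]
  ring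

end PMSG

namespace PMSG

open Matrix Finset

/-! ### Concrete entry computations -/

noncomputable def zval : Fin 2 → ℝ := fun a => if a = 0 then 1 else -1

lemma zval_inj {a b : Fin 2} (h : zval a = zval b) : a = b := by
  fin_cases a <;> fin_cases b <;> simp_all [zval] <;> norm_num at h

lemma zval_pm (a : Fin 2) : zval a = 1 ∨ zval a = -1 := by
  fin_cases a <;> simp [zval]

lemma sigZ_apply (a b : Fin 2) : sigZ a b = if a = b then zval a else 0 := by
  fin_cases a <;> fin_cases b <;> simp [sigZ, zval]

lemma sigX_apply (a b : Fin 2) : sigX a b = if b = flipv a then 1 else 0 := by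
  fin_cases a <;> fin_cases b <;> simp [sigX, flipv]

lemma sigZi_eq (n : ℕ) (i : Fin n) :
    sigZi n i = Matrix.diagonal (fun x => zval (x i)) := by
  ext x y
  rw [sigZi, Matrix.of_apply]
  by_cases hxy : x = y
  · subst hxy
    rw [Matrix.diagonal_apply_eq]
    have hfac : ∀ j, (if j = i then sigZ else 1) (x j) (x j)
        = if j = i then zval (x i) else 1 := by
      intro j
      by_cases hj : j = i
      · subst hj; rw [if_pos rfl, if_pos rfl, sigZ_apply, if_pos rfl]
      · rw [if_neg hj, if_neg hj, Matrix.one_apply_eq]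
    rw [Finset.prod_congr rfl fun j _ => hfac j]
    simp
  · rw [Matrix.diagonal_apply_ne _ hxy]
    have hex : ∃ j, x j ≠ y j := by
      by_contra h; push_neg at h; exact hxy (funext h)
    obtain ⟨j, hj⟩ := hex
    refine Finset.prod_eq_zero (Finset.mem_univ j) ?_
    by_cases hji : j = i
    · subst hji; rw [if_pos rfl, sigZ_apply, if_neg hj]
    · rw [if_neg hji, Matrix.one_apply_ne hj]

lemma sigXi_apply (n : ℕ) (i : Fin n) (x y : Fin n → Fin 2) :
    sigXi n i x y = if y = flipAt x i then 1 else 0 := by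
  rw [sigXi, Matrix.of_apply]
  by_cases hy : y = flipAt x i
  · subst hy
    rw [if_pos rfl]
    refine Finset.prod_eq_one fun j _ => ?_
    by_cases hj : j = i
    · subst hj
      rw [if_pos rfl, flipAt, Function.update_self, sigX_apply, if_pos rfl]
    · rw [if_neg hj, flipAt, Function.update_of_ne hj, Matrix.one_apply_eq]
  · rw [if_neg hy]
    have hex : ∃ j, y j ≠ flipAt x i j := by
      by_contra h; push_neg at h; exact hy (funext h)
    obtain ⟨j, hj⟩ := hex
    refine Finset.prod_eq_zero (Finset.mem_univ j) ?_
    by_cases hji : j = i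
    · subst hji
      rw [flipAt, Function.update_self] at hj
      rw [if_pos rfl, sigX_apply, if_neg hj]
    · rw [flipAt, Function.update_of_ne hji] at hj
      rw [if_neg hji, Matrix.one_apply_ne (Ne.symm hj)]

noncomputable def dvec (n : ℕ) (J : Matrix (Fin n) (Fin n) ℝ) (b : Fin n → ℝ) :
    (Fin n → Fin 2) → ℝ := fun x => isingCost n J b fun i => zval (x i)

lemma HP_eq (n : ℕ) (J : Matrix (Fin n) (Fin n) ℝ) (b : Fin n → ℝ) :
    HP n J b = Matrix.diagonal (dvec n J b) := by
  have h1 : ∀ i j : Fin n, sigZi n i * sigZi n j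
      = Matrix.diagonal fun x => zval (x i) * zval (x j) := by
    intro i j
    rw [sigZi_eq, sigZi_eq, Matrix.diagonal_mul_diagonal]
  ext x y
  by_cases hxy : x = y
  · subst hxy
    simp only [HP, Matrix.add_apply, Matrix.sum_apply, Matrix.smul_apply, sigZi_eq,
      Matrix.diagonal_mul_diagonal, Matrix.diagonal_apply_eq, smul_eq_mul]
    unfold dvec isingCost
    simp only [dotProduct, Matrix.mulVec]
    congr 1
    refine Finset.sum_congr rfl fun i _ => ?_
    rw [Finset.mul_sum]
    exact Finset.sum_congr rfl fun j _ => by ring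
  · simp only [HP, Matrix.add_apply, Matrix.sum_apply, Matrix.smul_apply, sigZi_eq,
      Matrix.diagonal_mul_diagonal, Matrix.diagonal_apply_ne _ hxy, smul_eq_mul, mul_zero,
      Finset.sum_const_zero, add_zero]

noncomputable def Msym (n : ℕ) (J : Matrix (Fin n) (Fin n) ℝ) (b : Fin n → ℝ) (κ : ℝ)
    (s : ℝ) : Matrix (Fin n → Fin 2) (Fin n → Fin 2) ℝ :=
  (1 - s) • HI n κ + s • HP n J b

lemma flipAt_invol {n : ℕ} (x : Fin n → Fin 2) (i : Fin n) :
    flipAt (flipAt x i) i = x := by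
  funext j
  by_cases hj : j = i
  · subst hj
    rw [flipAt, flipAt, Function.update_self]
    rw [show Function.update x j (flipv (x j)) j = flipv (x j) from Function.update_self _ _ _]
    have : ∀ a : Fin 2, flipv (flipv a) = a := by intro a; fin_cases a <;> simp [flipv]
    rw [this]
  · rw [flipAt, flipAt, Function.update_of_ne hj, Function.update_of_ne hj]

lemma sigXi_symm (n : ℕ) (i : Fin n) (x y : Fin n → Fin 2) :
    sigXi n i x y = sigXi n i y x := by
  rw [sigXi_apply, sigXi_apply]
  by_cases h : y = flipAt x i
  · subst h
    rw [if_pos rfl, if_pos (flipAt_invol x i).symm]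
  · rw [if_neg h, if_neg]
    intro hx
    apply h
    rw [hx, flipAt_invol]

lemma HI_symm (n : ℕ) (κ : ℝ) (x y : Fin n → Fin 2) : HI n κ x y = HI n κ y x := by
  simp only [HI, Matrix.neg_apply, Matrix.smul_apply, Matrix.sum_apply, smul_eq_mul]
  congr 1
  congr 1
  exact Finset.sum_congr rfl fun i _ => sigXi_symm n i x y

lemma HP_symm (n : ℕ) (J : Matrix (Fin n) (Fin n) ℝ) (b : Fin n → ℝ) (x y : Fin n → Fin 2) :
    HP n J b x y = HP n J b y x := by
  rw [HP_eq]
  by_cases h : x = y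
  · subst h; rfl
  · rw [Matrix.diagonal_apply_ne _ h, Matrix.diagonal_apply_ne _ (Ne.symm h)]

lemma Msym_herm (n : ℕ) (J : Matrix (Fin n) (Fin n) ℝ) (b : Fin n → ℝ) (κ : ℝ) (s : ℝ) :
    (Msym n J b κ s).IsHermitian := by
  apply Matrix.ext
  intro x y
  rw [Matrix.conjTranspose_apply]
  simp only [Msym, Matrix.add_apply, Matrix.smul_apply, smul_eq_mul, star_trivial]
  rw [HI_symm n κ y x, HP_symm n J b y x]

lemma HI_apply (n : ℕ) (κ : ℝ) (x y : Fin n → Fin 2) :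
    HI n κ x y = -(κ * ∑ i, (if y = flipAt x i then (1:ℝ) else 0)) := by
  simp only [HI, Matrix.neg_apply, Matrix.smul_apply, Matrix.sum_apply, smul_eq_mul]
  congr 2
  exact Finset.sum_congr rfl fun i _ => sigXi_apply n i x y

lemma Msym_offdiag (n : ℕ) (J : Matrix (Fin n) (Fin n) ℝ) (b : Fin n → ℝ) {κ s : ℝ}
    (hκ : 0 < κ) (hs : s ≤ 1) {x y : Fin n → Fin 2} (hxy : x ≠ y) :
    Msym n J b κ s x y ≤ 0 := by
  have hP : HP n J b x y = 0 := by rw [HP_eq, Matrix.diagonal_apply_ne _ hxy]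
  have hHI : HI n κ x y ≤ 0 := by
    rw [HI_apply]
    have hsum : (0:ℝ) ≤ ∑ i, (if y = flipAt x i then (1:ℝ) else 0) :=
      Finset.sum_nonneg fun i _ => by positivity
    nlinarith
  simp only [Msym, Matrix.add_apply, Matrix.smul_apply, smul_eq_mul, hP, mul_zero, add_zero]
  nlinarith

lemma Msym_neighbor (n : ℕ) (J : Matrix (Fin n) (Fin n) ℝ) (b : Fin n → ℝ) {κ s : ℝ}
    (hκ : 0 < κ) (hs : s < 1) (x : Fin n → Fin 2) (i : Fin n) :
    Msym n J b κ s x (flipAt x i) < 0 := by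
  have hne : x ≠ flipAt x i := (flipAt_ne x i).symm
  have hP : HP n J b x (flipAt x i) = 0 := by
    rw [HP_eq, Matrix.diagonal_apply_ne _ hne]
  have hsum : (1:ℝ) ≤ ∑ i', (if flipAt x i = flipAt x i' then (1:ℝ) else 0) := by
    have h := Finset.single_le_sum
      (f := fun i' => if flipAt x i = flipAt x i' then (1:ℝ) else 0)
      (fun i' _ => by positivity) (Finset.mem_univ i)
    simpa using h
  have hHI : HI n κ x (flipAt x i) ≤ -κ := by
    rw [HI_apply]
    nlinarith
  simp only [Msym, Matrix.add_apply, Matrix.smul_apply, smul_eq_mul, hP, mul_zero, add_zero]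
  nlinarith

end PMSG

open PMSG

/-- **Positive minimal spectral gap.** Under the hypotheses of the no-crossing theorem,
the minimal spectral gap over the whole evolution is strictly positive:
`inf_{t ∈ [0,T]} (λ₂(t) − λ₁(t)) > 0`. Equivalently, there is `δ > 0` such that for all
`t ∈ [0,T]`, the second smallest eigenvalue (with multiplicity) of `H(t)`—which equals
`min_{x ≠ y} max (λ_x(t)) (λ_y(t))` over the eigenvalues `λ_x(t)` listed with
multiplicity—is at least `λ₁(t) + δ`, where `λ₁(t) = ⨅ z, λ_z(t)` is the smallest
eigenvalue. -/
theorem positive_minimal_spectral_gap (n : ℕ) (hn : 1 ≤ n)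
    (J : Matrix (Fin n) (Fin n) ℝ) (b : Fin n → ℝ)
    (huniq : ∃! s : Fin n → ℝ, (∀ i, s i = 1 ∨ s i = -1) ∧
      ∀ s' : Fin n → ℝ, (∀ i, s' i = 1 ∨ s' i = -1) →
        isingCost n J b s ≤ isingCost n J b s')
    (κ : ℝ) (hκ : 0 < κ) (T : ℝ) (hT : 0 < T) (f : ℝ → ℝ)
    (hf_cont : ContinuousOn f (Set.Icc 0 T))
    (hf_mono : MonotoneOn f (Set.Icc 0 T))
    (hf_range : ∀ t ∈ Set.Icc 0 T, f t ∈ Set.Icc (0 : ℝ) 1)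
    (hf0 : f 0 = 0) (hfT : f T = 1)
    (hf_lt : ∀ t ∈ Set.Ico 0 T, f t < 1) :
    ∃ δ : ℝ, 0 < δ ∧ ∀ t ∈ Set.Icc 0 T, ∃ hH : (Hmat n J b κ f t).IsHermitian,
      ∀ x y : Fin n → Fin 2, x ≠ y →
        (⨅ z : Fin n → Fin 2, hH.eigenvalues z) + δ ≤
          max (hH.eigenvalues x) (hH.eigenvalues y) := by
    classical
  set x0 : Fin n → Fin 2 := fun _ => 0 with hx0
  set x1 : Fin n → Fin 2 := fun _ => 1 with hx1
  have hx01 : x0 ≠ x1 := by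
    intro h
    have h2 := congrFun h ⟨0, hn⟩
    simp only [hx0, hx1] at h2
    exact absurd h2 (by decide)
  have h2 : (Finset.univ : Finset (Fin n → Fin 2)).offDiag.Nonempty :=
    ⟨(x0, x1), Finset.mem_offDiag.2 ⟨Finset.mem_univ _, Finset.mem_univ _, hx01⟩⟩
  have hM : ∀ s : ℝ, (Msym n J b κ s).IsHermitian := Msym_herm n J b κ
  obtain ⟨sm, ⟨hsm_pm, hsm_min⟩, hsm_uniq⟩ := huniq
  set xmin : Fin n → Fin 2 := fun i => if sm i = 1 then 0 else 1 with hxmin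
  have hzx : ∀ i, zval (xmin i) = sm i := by
    intro i
    rcases hsm_pm i with h | h
    · simp [hxmin, zval, h]
    · have h1 : sm i ≠ 1 := by rw [h]; norm_num
      have e1 : xmin i = 1 := by rw [hxmin]; simp [h1]
      rw [e1, h]
      rfl
  have hdx : dvec n J b xmin = isingCost n J b sm := by
    unfold dvec
    congr 1
    funext i
    exact hzx i
  have hdmin : ∀ x, dvec n J b xmin ≤ dvec n J b x := by
    intro x
    rw [hdx]
    exact hsm_min _ fun i => zval_pm (x i)
  have hstrict : ∀ x, x ≠ xmin → dvec n J b xmin < dvec n J b x := by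
    intro x hx
    rcases lt_or_eq_of_le (hdmin x) with h | h
    · exact h
    · exfalso
      have hxm : (fun i => zval (x i)) = sm := by
        apply hsm_uniq
        refine ⟨fun i => zval_pm (x i), ?_⟩
        intro s' hs'
        have e0 : isingCost n J b (fun i => zval (x i)) = dvec n J b x := rfl
        rw [e0, ← h, hdx]
        exact hsm_min s' hs'
      apply hx
      funext i
      apply zval_inj
      have e1 : zval (x i) = sm i := congrFun hxm i
      rw [e1, hzx i]
  have hne_er : (Finset.univ.erase xmin : Finset (Fin n → Fin 2)).Nonempty := by
    by_cases h : x0 = xmin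
    · exact ⟨x1, Finset.mem_erase.2 ⟨by rw [← h]; exact Ne.symm hx01, Finset.mem_univ _⟩⟩
    · exact ⟨x0, Finset.mem_erase.2 ⟨h, Finset.mem_univ _⟩⟩
  set γ := (Finset.univ.erase xmin).inf' hne_er
    (fun x => dvec n J b x - dvec n J b xmin) with hγ
  have hγpos : 0 < γ := by
    rw [hγ, Finset.lt_inf'_iff]
    intro x hx
    have := hstrict x (Finset.mem_erase.1 hx).1
    linarith
  have hγle : ∀ x, x ≠ xmin → dvec n J b xmin + γ ≤ dvec n J b x := by
    intro x hx
    have h := Finset.inf'_le (fun x => dvec n J b x - dvec n J b xmin)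
      (Finset.mem_erase.2 ⟨hx, Finset.mem_univ x⟩)
    rw [← hγ] at h
    linarith
  have hM1 : Msym n J b κ 1 = Matrix.diagonal (dvec n J b) := by
    show (1 - 1) • HI n κ + 1 • HP n J b = _
    rw [sub_self, zero_smul, one_smul, zero_add, HP_eq]
  have hqdiag : ∀ w : (Fin n → Fin 2) → ℝ,
      qf (Msym n J b κ 1) w = ∑ p, dvec n J b p * (w p * w p) := by
    intro w
    rw [hM1, qf_eq_sum]
    refine Finset.sum_congr rfl fun p _ => ?_
    rw [Finset.sum_eq_single p]
    · rw [Matrix.diagonal_apply_eq]; ring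
    · intro q _ hq
      rw [Matrix.diagonal_apply_ne _ (Ne.symm hq)]; ring
    · intro hp; exact absurd (Finset.mem_univ p) hp
  have hsingle : (Pi.single xmin 1 : (Fin n → Fin 2) → ℝ) ⬝ᵥ Pi.single xmin 1 = 1 := by
    rw [single_dotProduct]
    simp
  have hlam1dmin : lam1 (hM 1) ≤ dvec n J b xmin := by
    have h := lam1_rayleigh (hM 1) (Pi.single xmin 1)
    rw [hsingle, mul_one] at h
    have hq1 : qf (Msym n J b κ 1) (Pi.single xmin 1) = dvec n J b xmin := by
      rw [hqdiag, Finset.sum_eq_single xmin]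
      · simp
      · intro q _ hq
        rw [Pi.single_eq_of_ne hq]; ring
      · intro hp; exact absurd (Finset.mem_univ xmin) hp
    rw [hq1] at h
    exact h
  have hdiag : ∀ x y : Fin n → Fin 2, x ≠ y →
      lam1 (hM 1) + γ ≤ max ((hM 1).eigenvalues x) ((hM 1).eigenvalues y) := by
    intro x y hxy
    obtain ⟨w, hw1, hw0, hwq⟩ := small_witness (hM 1) x y hxy (Pi.single xmin 1)
    have hwxmin : w xmin = 0 := by
      rw [single_dotProduct, one_mul] at hw0
      exact hw0
    have hlow : dvec n J b xmin + γ ≤ qf (Msym n J b κ 1) w := by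
      rw [hqdiag]
      have hterm : ∀ p : Fin n → Fin 2, (dvec n J b xmin + γ) * (w p * w p)
          ≤ dvec n J b p * (w p * w p) := by
        intro p
        by_cases hp : p = xmin
        · subst hp; rw [hwxmin]; simp
        · exact mul_le_mul_of_nonneg_right (hγle p hp) (mul_self_nonneg _)
      calc dvec n J b xmin + γ = (dvec n J b xmin + γ) * (w ⬝ᵥ w) := by rw [hw1, mul_one]
        _ = ∑ p, (dvec n J b xmin + γ) * (w p * w p) := by
            rw [dotProduct, Finset.mul_sum]
        _ ≤ _ := Finset.sum_le_sum fun p _ => hterm p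
    calc lam1 (hM 1) + γ ≤ dvec n J b xmin + γ := by linarith
      _ ≤ qf (Msym n J b κ 1) w := hlow
      _ ≤ _ := hwq
  have gpos : ∀ s ∈ Set.Icc (0:ℝ) 1, 0 < lam2 (hM s) h2 - lam1 (hM s) := by
    intro s hs
    obtain ⟨x, y, hxy, hval⟩ := exists_lam2 (hM s) h2
    rcases eq_or_lt_of_le hs.2 with h1 | h1
    · subst h1
      have hd := hdiag x y hxy
      rw [← hval] at hd
      linarith
    · by_contra hcon
      push_neg at hcon
      have hmle : max ((hM s).eigenvalues x) ((hM s).eigenvalues y) ≤ lam1 (hM s) := by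
        rw [← hval]; linarith
      have hx : (hM s).eigenvalues x = lam1 (hM s) :=
        le_antisymm (le_trans (le_max_left _ _) hmle) (lam1_le (hM s) x)
      have hy : (hM s).eigenvalues y = lam1 (hM s) :=
        le_antisymm (le_trans (le_max_right _ _) hmle) (lam1_le (hM s) y)
      exact pf_simple (hM s)
        (fun x y hxy => Msym_offdiag n J b hκ h1.le hxy)
        (Msym_neighbor n J b hκ h1) hxy ⟨hx, hy⟩
  set K := eb (HP n J b - HI n κ) with hK
  have hΔ : ∀ s s' : ℝ, Msym n J b κ s' - Msym n J b κ s
      = (s' - s) • (HP n J b - HI n κ) := by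
    intro s s'
    apply Matrix.ext; intro x y
    simp only [Msym, Matrix.sub_apply, Matrix.add_apply, Matrix.smul_apply, smul_eq_mul]
    ring
  have hlam1lip : ∀ s s' : ℝ, lam1 (hM s') ≤ lam1 (hM s) + |s' - s| * K := by
    intro s s'
    have h := weyl_lam1 (hM s) (hM s')
    rwa [hΔ s s', eb_smul] at h
  have hlam2lip : ∀ s s' : ℝ, lam2 (hM s') h2 ≤ lam2 (hM s) h2 + |s' - s| * K := by
    intro s s'
    have h := weyl_lam2 (hM s) (hM s') h2
    rwa [hΔ s s', eb_smul] at h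
  set g : ℝ → ℝ := fun s => lam2 (hM s) h2 - lam1 (hM s) with hg
  have hglip : ∀ s s' : ℝ, |g s' - g s| ≤ 2 * K * |s' - s| := by
    intro s s'
    have a1 := hlam1lip s s'
    have a2 := hlam1lip s' s
    have b1 := hlam2lip s s'
    have b2 := hlam2lip s' s
    rw [abs_sub_comm s s'] at a2 b2
    rw [abs_le]
    constructor
    · simp only [hg]; linarith
    · simp only [hg]; linarith
  have hKnn : (0:ℝ) ≤ K := eb_nonneg _
  have hgc : Continuous g := by
    refine LipschitzWith.continuous (K := Real.toNNReal (2 * K)) ?_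
    refine LipschitzWith.of_dist_le_mul fun a c => ?_
    rw [Real.dist_eq, Real.dist_eq, Real.coe_toNNReal _ (by positivity)]
    exact hglip c a
  obtain ⟨s0, hs0mem, hs0min⟩ := isCompact_Icc.exists_isMinOn
    (Set.nonempty_Icc.2 zero_le_one) hgc.continuousOn
  refine ⟨g s0, gpos s0 hs0mem, ?_⟩
  intro t ht
  refine ⟨hM (f t), ?_⟩
  intro x y hxy
  have hft := hf_range t ht
  have hmin : g s0 ≤ g (f t) := isMinOn_iff.1 hs0min (f t) hft
  show (⨅ z, (hM (f t)).eigenvalues z) + g s0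
      ≤ max ((hM (f t)).eigenvalues x) ((hM (f t)).eigenvalues y)
  rw [← lam1_eq_iInf (hM (f t))]
  have hl2 := lam2_le (hM (f t)) h2 hxy
  simp only [hg] at hmin ⊢
  linarith
end

section
/- (Freedman–Drineas quadratization of negative monomials.) For every d ≥ 1 and every x = (x₁,…,x_d) ∈ {0,1}^d, −(x₁·x₂·⋯·x_d) = min over z ∈ {0,1} of z·((d − 1) − Σ_{j=1}^d x_j). That is, the degree-d negative monomial −∏_j x_j equals, pointwise on binary inputs, the minimum over one ancilla binary variable z of the quadratic expression z(d − 1 − Σ_j x_j). -/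
open BigOperators

/-- **Freedman–Drineas quadratization of negative monomials.** For every `d ≥ 1` and
every binary `x ∈ {0,1}^d`, the negative monomial `−(x₁⋯x_d)` equals the minimum, over
the ancilla binary variable `z ∈ {0,1}`, of the quadratic expression
`z·((d − 1) − Σ_j x_j)`. -/
theorem freedman_drineas_quadratization (d : ℕ) (hd : 1 ≤ d)
    (x : Fin d → ℝ) (hx : ∀ j, x j = 0 ∨ x j = 1) :
    IsLeast {y : ℝ | ∃ z : ℝ, (z = 0 ∨ z = 1) ∧
        y = z * (((d : ℝ) - 1) - ∑ j, x j)}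
      (-(∏ j, x j)) := by
  by_cases h : ∀ j, x j = 1
  · have hprod : (∏ j, x j) = 1 := Finset.prod_eq_one (fun j _ => h j)
    have hsum : (∑ j, x j) = (d : ℝ) := by
      rw [Finset.sum_congr rfl (fun j _ => h j)]
      simp
    constructor
    · exact ⟨1, Or.inr rfl, by rw [hprod, hsum]; ring⟩
    · rintro y ⟨z, hz, rfl⟩
      rw [hprod, hsum]
      rcases hz with rfl | rfl
      · norm_num
      · norm_num
  · push_neg at h
    obtain ⟨j0, hj0⟩ := h
    have hj0' : x j0 = 0 := (hx j0).resolve_right hj0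
    have hprod : (∏ j, x j) = 0 :=
      Finset.prod_eq_zero (Finset.mem_univ j0) hj0'
    have hsum : (∑ j, x j) ≤ (d : ℝ) - 1 := by
      have : (∑ j, x j) = ∑ j ∈ Finset.univ.erase j0, x j := by
        rw [← Finset.sum_erase_add _ _ (Finset.mem_univ j0), hj0', add_zero]
      rw [this]
      calc ∑ j ∈ Finset.univ.erase j0, x j
          ≤ ∑ _j ∈ Finset.univ.erase j0, (1 : ℝ) :=
            Finset.sum_le_sum (fun j _ => by rcases hx j with h1 | h1 <;> rw [h1] <;> norm_num)
        _ = ((Finset.univ.erase j0).card : ℝ) := by simp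
        _ = (d : ℝ) - 1 := by
            rw [Finset.card_erase_of_mem (Finset.mem_univ j0)]
            simp [Nat.cast_sub hd]
    constructor
    · exact ⟨0, Or.inl rfl, by rw [hprod]; ring⟩
    · rintro y ⟨z, hz, rfl⟩
      rw [hprod]
      rcases hz with rfl | rfl
      · norm_num
      · simp only [one_mul, neg_zero]
        linarith
end

section
/- (Tight copositive reformulation of constrained binary quadratic optimisation.) Let Q ∈ ℝ^{n×n} be symmetric, c ∈ ℝⁿ, a₁,…,a_m ∈ ℝⁿ and b₁,…,b_m ∈ ℝ, and suppose the binary feasible set F := {x ∈ {0,1}ⁿ : aᵢᵀx = bᵢ for i = 1,…,m} is nonempty. Define the cone section Δ^{n+1} := conv{ z zᵀ : z ∈ {0,1}^{n+1} } ⊆ ℝ^{(n+1)×(n+1)}. Then the binary quadratic program min_{x ∈ F} xᵀ Q x + 2cᵀx has the same optimal value as the convex program min over pairs (x, X) ∈ ℝⁿ × ℝ^{n×n} of Tr(QX) + 2cᵀx subject to: aᵢᵀx = bᵢ for all i; Tr(aᵢaᵢᵀ X) = bᵢ² for all i; diag(X) = x; and the (n+1)×(n+1) block matrix [[1, xᵀ],[x,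 X]] lies in Δ^{n+1}. Moreover both optimal values are attained. -/
open Matrix BigOperators

/-- The cone section `Δ^ι := conv{ z zᵀ : z ∈ {0,1}^ι }`. -/
noncomputable def DeltaCone (ι : Type*) [Fintype ι] : Set (Matrix ι ι ℝ) :=
  convexHull ℝ
    {M : Matrix ι ι ℝ | ∃ z : ι → ℝ, (∀ i, z i = 0 ∨ z i = 1) ∧ M = Matrix.vecMulVec z z}

/-- The `(n+1)×(n+1)` block matrix `[[1, xᵀ],[x, X]]` (indexed by `Unit ⊕ Fin n`). -/
noncomputable def blockMat (n : ℕ) (x : Fin n → ℝ) (X : Matrix (Fin n) (Fin n) ℝ) :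
    Matrix (Unit ⊕ Fin n) (Unit ⊕ Fin n) ℝ :=
  Matrix.fromBlocks (Matrix.of fun _ _ => (1 : ℝ)) (Matrix.of fun _ j => x j)
    (Matrix.of fun i _ => x i) X

/-- trace of `Q * y zᵀ` is `z ⬝ (Q y)`. -/
lemma trace_mul_vecMulVec' {n : ℕ} (Q : Matrix (Fin n) (Fin n) ℝ) (y z : Fin n → ℝ) :
    (Q * Matrix.vecMulVec y z).trace = z ⬝ᵥ Q.mulVec y := by
  simp only [Matrix.trace, Matrix.diag, Matrix.mul_apply, Matrix.vecMulVec_apply,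
    dotProduct, Matrix.mulVec, Finset.mul_sum]
  apply Finset.sum_congr rfl; intro i _
  apply Finset.sum_congr rfl; intro j _
  ring

lemma trace_vecMulVec_mul_vecMulVec {n : ℕ} (a y : Fin n → ℝ) :
    (Matrix.vecMulVec a a * Matrix.vecMulVec y y).trace = (a ⬝ᵥ y) * (a ⬝ᵥ y) := by
  rw [trace_mul_vecMulVec']
  simp only [dotProduct, Matrix.mulVec, Matrix.vecMulVec_apply, Finset.mul_sum,
    Finset.sum_mul]
  apply Finset.sum_congr rfl; intro i _
  apply Finset.sum_congr rfl; intro j _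
  ring

/-- **Tight copositive reformulation of constrained binary quadratic optimisation.**
If `F = {x ∈ {0,1}ⁿ : aᵢᵀx = bᵢ ∀i}` is nonempty and `Q` is symmetric, then the binary
quadratic program `min_{x ∈ F} xᵀQx + 2cᵀx` and the convex program
`min Tr(QX) + 2cᵀx` subject to `aᵢᵀx = bᵢ`, `Tr(aᵢaᵢᵀX) = bᵢ²`, `diag X = x` and
`[[1,xᵀ],[x,X]] ∈ Δ^{n+1}` have the same optimal value, and both optima are attained. -/
theorem copositive_reformulation (n m : ℕ) (hn : 1 ≤ n)
    (Q : Matrix (Fin n) (Fin n) ℝ) (hQ : Q.IsSymm) (c : Fin n → ℝ)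
    (a : Fin m → Fin n → ℝ) (b : Fin m → ℝ)
    (hF : ∃ x : Fin n → ℝ, (∀ i, x i = 0 ∨ x i = 1) ∧ ∀ i, a i ⬝ᵥ x = b i) :
    ∃ v : ℝ,
      IsLeast {r : ℝ | ∃ x : Fin n → ℝ,
          ((∀ i, x i = 0 ∨ x i = 1) ∧ ∀ i, a i ⬝ᵥ x = b i) ∧
          r = x ⬝ᵥ Q.mulVec x + 2 * (c ⬝ᵥ x)} v ∧
      IsLeast {r : ℝ | ∃ (x : Fin n → ℝ) (X : Matrix (Fin n) (Fin n) ℝ),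
          ((∀ i, a i ⬝ᵥ x = b i) ∧
            (∀ i, (Matrix.vecMulVec (a i) (a i) * X).trace = (b i) ^ 2) ∧
            Matrix.diag X = x ∧
            blockMat n x X ∈ DeltaCone (Unit ⊕ Fin n)) ∧
          r = (Q * X).trace + 2 * (c ⬝ᵥ x)} v := by
  classical
  set obj : (Fin n → ℝ) → ℝ := fun x => x ⬝ᵥ Q.mulVec x + 2 * (c ⬝ᵥ x) with hobj
  set S1 : Set ℝ := {r : ℝ | ∃ x : Fin n → ℝ,
      ((∀ i, x i = 0 ∨ x i = 1) ∧ ∀ i, a i ⬝ᵥ x = b i) ∧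
      r = x ⬝ᵥ Q.mulVec x + 2 * (c ⬝ᵥ x)} with hS1
  -- S1 is finite
  have hBfin : ({x : Fin n → ℝ | (∀ i, x i = 0 ∨ x i = 1) ∧ ∀ i, a i ⬝ᵥ x = b i}).Finite := by
    apply Set.Finite.subset (Set.Finite.pi (t := fun _ : Fin n => ({0, 1} : Set ℝ))
      (fun _ => (Set.finite_singleton (1:ℝ)).insert 0))
    intro x hx i _
    rcases hx.1 i with h | h <;> simp [h]
  have hS1fin : S1.Finite := by
    have : S1 = obj '' {x : Fin n → ℝ | (∀ i, x i = 0 ∨ x i = 1) ∧ ∀ i, a i ⬝ᵥ x = b i} := by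
      ext r
      constructor
      · rintro ⟨x, hx, rfl⟩; exact ⟨x, hx, rfl⟩
      · rintro ⟨x, hx, rfl⟩; exact ⟨x, hx, rfl⟩
    rw [this]; exact hBfin.image _
  have hS1ne : S1.Nonempty := by
    obtain ⟨x, hx1, hx2⟩ := hF
    exact ⟨obj x, x, ⟨hx1, hx2⟩, rfl⟩
  set v : ℝ := hS1fin.toFinset.min' (by simpa using hS1ne) with hv
  have hvLeast : IsLeast S1 v := by
    constructor
    · have := hS1fin.toFinset.min'_mem (by simpa using hS1ne)
      simpa using this
    · intro r hr
      exact hS1fin.toFinset.min'_le r (by simpa using hr)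
  refine ⟨v, hvLeast, ?_, ?_⟩
  · -- v is in the convex set
    obtain ⟨x, ⟨hxbin, hxfeas⟩, hxval⟩ := hvLeast.1
    refine ⟨x, Matrix.vecMulVec x x, ⟨hxfeas, ?_, ?_, ?_⟩, ?_⟩
    · intro i
      rw [trace_vecMulVec_mul_vecMulVec, hxfeas i, sq]
    · ext i
      simp only [Matrix.diag, Matrix.vecMulVec_apply]
      rcases hxbin i with h | h <;> simp [h]
    · apply subset_convexHull
      refine ⟨Sum.elim (fun _ => (1 : ℝ)) x, ?_, ?_⟩
      · rintro (u | j)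
        · right; rfl
        · exact hxbin j
      · ext i j
        rcases i with u | i <;> rcases j with u' | j <;>
          simp [blockMat, Matrix.vecMulVec_apply]
    · rw [trace_mul_vecMulVec']
      exact hxval
  · -- v is a lower bound for the convex program values
    rintro r ⟨x, X, ⟨hxfeas, htr, hdiag, hcone⟩, hrval⟩
    rw [DeltaCone, _root_.convexHull_eq] at hcone
    obtain ⟨ι, t, w, z, hw0, hw1, hzmem, hcm⟩ := hcone
    rw [Finset.centerMass_eq_of_sum_1 _ _ hw1] at hcm
    -- choose binary vectors
    have hz' : ∀ k : ι, ∃ ζ : Unit ⊕ Fin n → ℝ,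
        k ∈ t → (∀ i, ζ i = 0 ∨ ζ i = 1) ∧ z k = Matrix.vecMulVec ζ ζ := by
      intro k
      by_cases hk : k ∈ t
      · obtain ⟨ζ, h1, h2⟩ := hzmem k hk
        exact ⟨ζ, fun _ => ⟨h1, h2⟩⟩
      · exact ⟨0, fun h => absurd h hk⟩
    choose ζ hζ using hz'
    set s : ι → ℝ := fun k => ζ k (Sum.inl ()) with hs
    set y : ι → Fin n → ℝ := fun k j => ζ k (Sum.inr j) with hy
    have hM : blockMat n x X = ∑ k ∈ t, w k • Matrix.vecMulVec (ζ k) (ζ k) := by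
      rw [← hcm]
      exact (Finset.sum_congr rfl fun k hk => by rw [(hζ k hk).2]).symm
    have hEntry : ∀ i j, blockMat n x X i j = ∑ k ∈ t, w k * (ζ k i * ζ k j) := by
      intro i j
      rw [hM]
      simp [Matrix.sum_apply, Matrix.vecMulVec_apply]
    have h11 : ∑ k ∈ t, w k * s k = 1 := by
      have h := hEntry (Sum.inl ()) (Sum.inl ())
      simp only [blockMat, Matrix.fromBlocks_apply₁₁, Matrix.of_apply] at h
      rw [h]
      apply Finset.sum_congr rfl
      intro k hk
      rcases (hζ k hk).1 (Sum.inl ()) with h' | h' <;> simp [hs, h']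
    -- atoms with positive weight have s k = 1
    have hskey : ∀ k ∈ t, w k ≠ 0 → s k = 1 := by
      have hzero : ∑ k ∈ t, w k * (1 - s k) = 0 := by
        simp only [mul_sub, Finset.sum_sub_distrib, mul_one, hw1, h11, sub_self]
      have hnn : ∀ k ∈ t, 0 ≤ w k * (1 - s k) := by
        intro k hk
        apply mul_nonneg (hw0 k hk)
        rcases (hζ k hk).1 (Sum.inl ()) with h | h <;> simp [hs, h]
      intro k hk hwk
      have h := (Finset.sum_eq_zero_iff_of_nonneg hnn).mp hzero k hk
      rcases mul_eq_zero.mp h with h' | h'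
      · exact absurd h' hwk
      · linarith
    have hxj : ∀ j, x j = ∑ k ∈ t, w k * (s k * y k j) := by
      intro j
      have h := hEntry (Sum.inl ()) (Sum.inr j)
      simpa [blockMat] using h
    have hXij : X = ∑ k ∈ t, w k • Matrix.vecMulVec (y k) (y k) := by
      ext i j
      have h := hEntry (Sum.inr i) (Sum.inr j)
      simp only [blockMat, Matrix.fromBlocks_apply₂₂] at h
      rw [h]
      simp [Matrix.sum_apply, Matrix.vecMulVec_apply, hy]
    -- dot products with x
    have hdot : ∀ u : Fin n → ℝ, u ⬝ᵥ x = ∑ k ∈ t, w k * (s k * (u ⬝ᵥ y k)) := by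
      intro u
      simp only [dotProduct]
      calc ∑ j, u j * x j = ∑ j, ∑ k ∈ t, u j * (w k * (s k * y k j)) := by
            apply Finset.sum_congr rfl; intro j _
            rw [hxj j, Finset.mul_sum]
        _ = ∑ k ∈ t, ∑ j, u j * (w k * (s k * y k j)) := Finset.sum_comm
        _ = ∑ k ∈ t, w k * (s k * ∑ j, u j * y k j) := by
            apply Finset.sum_congr rfl; intro k _
            rw [Finset.mul_sum, Finset.mul_sum]
            apply Finset.sum_congr rfl; intro j _; ring
    -- trace identities
    have htrQ : (Q * X).trace = ∑ k ∈ t, w k * (y k ⬝ᵥ Q.mulVec (y k)) := by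
      rw [hXij, Matrix.mul_sum, Matrix.trace_sum]
      apply Finset.sum_congr rfl; intro k _
      rw [Matrix.mul_smul, Matrix.trace_smul, trace_mul_vecMulVec', smul_eq_mul]
    have htrA : ∀ i, ∑ k ∈ t, w k * ((a i ⬝ᵥ y k) * (a i ⬝ᵥ y k)) = (b i) ^ 2 := by
      intro i
      rw [← htr i, hXij, Matrix.mul_sum, Matrix.trace_sum]
      apply Finset.sum_congr rfl; intro k _
      rw [Matrix.mul_smul, Matrix.trace_smul, trace_vecMulVec_mul_vecMulVec, smul_eq_mul]
    -- each positive-weight atom is feasible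
    have hfeaskey : ∀ k ∈ t, w k ≠ 0 → ∀ i, a i ⬝ᵥ y k = b i := by
      intro k hk hwk i
      have hA : ∑ k' ∈ t, w k' * (a i ⬝ᵥ y k') = b i := by
        rw [← hxfeas i, hdot (a i)]
        apply Finset.sum_congr rfl
        intro k' hk'
        by_cases hwk' : w k' = 0
        · simp [hwk']
        · rw [hskey k' hk' hwk', one_mul]
      have hzero : ∑ k' ∈ t, w k' * (a i ⬝ᵥ y k' - b i) ^ 2 = 0 := by
        have expand : ∀ k' : ι, w k' * (a i ⬝ᵥ y k' - b i) ^ 2 =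
            w k' * ((a i ⬝ᵥ y k') * (a i ⬝ᵥ y k')) - 2 * b i * (w k' * (a i ⬝ᵥ y k'))
              + b i ^ 2 * w k' := by intro k'; ring
        simp only [expand, Finset.sum_add_distrib, Finset.sum_sub_distrib,
          ← Finset.mul_sum, htrA i, hA, hw1]
        ring
      have hnn : ∀ k' ∈ t, 0 ≤ w k' * (a i ⬝ᵥ y k' - b i) ^ 2 := fun k' _ =>
        mul_nonneg (hw0 k' ‹k' ∈ t›) (sq_nonneg _)
      have h := (Finset.sum_eq_zero_iff_of_nonneg hnn).mp hzero k hk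
      rcases mul_eq_zero.mp h with h' | h'
      · exact absurd h' hwk
      · have := sq_eq_zero_iff.mp h'
        linarith
    -- objective expression
    have hrsum : r = ∑ k ∈ t, w k * (s k * obj (y k)) := by
      have h1 : (Q * X).trace = ∑ k ∈ t, w k * (s k * (y k ⬝ᵥ Q.mulVec (y k))) := by
        rw [htrQ]
        apply Finset.sum_congr rfl; intro k hk
        by_cases hwk : w k = 0
        · simp [hwk]
        · rw [hskey k hk hwk, one_mul]
      rw [hrval, h1, hdot c]
      simp only [hobj, Finset.mul_sum, ← Finset.sum_add_distrib]
      apply Finset.sum_congr rfl; intro k _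
      ring
    -- conclude
    rw [hrsum]
    have hvle : v = ∑ k ∈ t, w k * v := by
      rw [← Finset.sum_mul, hw1, one_mul]
    rw [hvle]
    apply Finset.sum_le_sum
    intro k hk
    by_cases hwk : w k = 0
    · simp [hwk]
    · rw [hskey k hk hwk, one_mul]
      apply mul_le_mul_of_nonneg_left _ (hw0 k hk)
      apply hvLeast.2
      exact ⟨y k, ⟨fun j => (hζ k hk).1 (Sum.inr j), hfeaskey k hk hwk⟩, rfl⟩
end

section
/- (Derivative of an eigenvector against another eigenvector.) Let N ≥ 1 and let H : ℝ → ℂ^{N×N} be a family of Hermitian matrices that is differentiable at t₀ with derivative H'(t₀). Let k, l : ℝ → ℂ^N be differentiable at t₀ and λ_k, λ_l : ℝ → ℝ be differentiable at t₀, and suppose H(t) k(t) = λ_k(t) k(t) and H(t) l(t) = λ_l(t) l(t) for all t in a neighbourhood of t₀, with λ_k(t₀) ≠ λ_l(t₀) and ⟨l(t₀), k(t₀)⟩ = 0. Then ⟨l(t₀), k'(t₀)⟩ = ⟨l(t₀), H'(t₀) k(t₀)⟩ / (λ_k(t₀) − λ_l(t₀)). (In particular, the overlap of k' с another eigenvector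 l is small whenever the change H' of the Hamiltonian is small in comparison to the gap between the eigenvalues λ_k and λ_l.) -/
open Matrix BigOperators

/-- **Derivative of an eigenvector against another eigenvector.** Let `H(t)` be a family
of Hermitian matrices, differentiable at `t₀` with derivative `H'`. Let `k, l` be curves
of eigenvectors of `H(t)` with real eigenvalues `λ_k(t), λ_l(t)` near `t₀`, all
differentiable at `t₀`, with `λ_k(t₀) ≠ λ_l(t₀)` and `⟨l(t₀), k(t₀)⟩ = 0` (inner product
conjugate-linear in the first argument, `⟨u,v⟩ = Σ conj(uᵢ) vᵢ`). Then
`⟨l(t₀), k'(t₀)⟩ = ⟨l(t₀), H'(t₀) k(t₀)⟩ / (λ_k(t₀) − λ_l(t₀))`. -/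
theorem eigenvector_derivative_overlap (N : ℕ) (hN : 1 ≤ N)
    (H : ℝ → Matrix (Fin N) (Fin N) ℂ) (hHerm : ∀ t, (H t).IsHermitian)
    (t₀ : ℝ) (H' : Matrix (Fin N) (Fin N) ℂ)
    (hH' : ∀ i j, HasDerivAt (fun t => H t i j) (H' i j) t₀)
    (k l : ℝ → Fin N → ℂ) (k' : Fin N → ℂ)
    (hk' : ∀ j, HasDerivAt (fun t => k t j) (k' j) t₀)
    (hl : ∀ j, DifferentiableAt ℝ (fun t => l t j) t₀)
    (lamk laml : ℝ → ℝ)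
    (hlamk : DifferentiableAt ℝ lamk t₀) (hlaml : DifferentiableAt ℝ laml t₀)
    (heigk : ∀ᶠ t in nhds t₀, (H t).mulVec (k t) = ((lamk t : ℂ)) • k t)
    (heigl : ∀ᶠ t in nhds t₀, (H t).mulVec (l t) = ((laml t : ℂ)) • l t)
    (hne : lamk t₀ ≠ laml t₀)
    (horth : star (l t₀) ⬝ᵥ k t₀ = 0) :
    star (l t₀) ⬝ᵥ k' =
      (star (l t₀) ⬝ᵥ H'.mulVec (k t₀)) / ((lamk t₀ : ℂ) - (laml t₀ : ℂ)) := by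
  set u : Fin N → ℂ := star (l t₀) with hu
  set X : ℂ := u ⬝ᵥ k' with hX
  have hlamkC : HasDerivAt (fun t => (lamk t : ℂ)) ((deriv lamk t₀ : ℝ) : ℂ) t₀ :=
    (hlamk.hasDerivAt).ofReal_comp
  -- derivative of t ↦ u ⬝ᵥ (H t).mulVec (k t)
  have hA : HasDerivAt (fun t => u ⬝ᵥ (H t).mulVec (k t))
      (u ⬝ᵥ H'.mulVec (k t₀) + u ⬝ᵥ (H t₀).mulVec k') t₀ := by
    have h0 : ∀ j ∈ Finset.univ, HasDerivAt (fun t => u j * ((H t).mulVec (k t) j))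
        (u j * (H'.mulVec (k t₀) j + (H t₀).mulVec k' j)) t₀ := by
      intro j _
      have h1 : ∀ i ∈ Finset.univ, HasDerivAt (fun t => H t j i * k t i)
          (H' j i * k t₀ i + H t₀ j i * k' i) t₀ := fun i _ => (hH' j i).mul (hk' i)
      have hs := HasDerivAt.fun_sum h1
      have h2 : HasDerivAt (fun t => (H t).mulVec (k t) j)
          (H'.mulVec (k t₀) j + (H t₀).mulVec k' j) t₀ := by
        simpa [Matrix.mulVec, dotProduct, Finset.sum_add_distrib] using hs
      simpa using h2.const_mul (u j)
    have hs := HasDerivAt.fun_sum h0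
    simpa [dotProduct, mul_add, Finset.sum_add_distrib, Finset.mul_sum] using hs
  -- derivative of t ↦ u ⬝ᵥ k t
  have hK : HasDerivAt (fun t => u ⬝ᵥ k t) X t₀ := by
    have h0 : ∀ j ∈ Finset.univ, HasDerivAt (fun t => u j * k t j) (u j * k' j) t₀ :=
      fun j _ => (hk' j).const_mul (u j)
    have hs := HasDerivAt.fun_sum h0
    simpa [hX, dotProduct] using hs
  have hB : HasDerivAt (fun t => (lamk t : ℂ) * (u ⬝ᵥ k t))
      (((deriv lamk t₀ : ℝ) : ℂ) * (u ⬝ᵥ k t₀) + (lamk t₀ : ℂ) * X) t₀ :=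
    hlamkC.mul hK
  have heq : (fun t => u ⬝ᵥ (H t).mulVec (k t)) =ᶠ[nhds t₀]
      (fun t => (lamk t : ℂ) * (u ⬝ᵥ k t)) := by
    filter_upwards [heigk] with t ht
    simp [ht, dotProduct_smul, smul_eq_mul]
  have hA' : HasDerivAt (fun t => u ⬝ᵥ (H t).mulVec (k t))
      (((deriv lamk t₀ : ℝ) : ℂ) * (u ⬝ᵥ k t₀) + (lamk t₀ : ℂ) * X) t₀ :=
    hB.congr_of_eventuallyEq heq
  have hmain : u ⬝ᵥ H'.mulVec (k t₀) + u ⬝ᵥ (H t₀).mulVec k'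
      = ((deriv lamk t₀ : ℝ) : ℂ) * (u ⬝ᵥ k t₀) + (lamk t₀ : ℂ) * X :=
    hA.unique hA'
  -- Hermitian step
  have heigl0 : (H t₀).mulVec (l t₀) = ((laml t₀ : ℂ)) • l t₀ := heigl.self_of_nhds
  have hHerm0 : u ⬝ᵥ (H t₀).mulVec k' = (laml t₀ : ℂ) * X := by
    have hv : (H t₀).vecMul u = (laml t₀ : ℂ) • u := by
      have : Matrix.vecMul (star (l t₀)) ((H t₀)ᴴ) = star ((H t₀).mulVec (l t₀)) :=
        (Matrix.star_mulVec _ _).symm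
      rw [(hHerm t₀).eq] at this
      rw [hu, this, heigl0]
      ext i
      simp [star_smul, Complex.star_def]
    calc u ⬝ᵥ (H t₀).mulVec k' = (H t₀).vecMul u ⬝ᵥ k' := by
          rw [Matrix.dotProduct_mulVec]
      _ = ((laml t₀ : ℂ) • u) ⬝ᵥ k' := by rw [hv]
      _ = (laml t₀ : ℂ) * X := by rw [smul_dotProduct, hX, smul_eq_mul]
  rw [horth, mul_zero, zero_add, hHerm0] at hmain
  have hd : (lamk t₀ : ℂ) - (laml t₀ : ℂ) ≠ 0 := by
    intro h
    apply hne
    have := sub_eq_zero.mp h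
    exact_mod_cast this
  field_simp
  linear_combination -hmain
end
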